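/- arXiv:1501.04713 — 6 statements merged into one kernel-verified Lean document; each statement's English description precedes it below -/
import Mathlib

section
/- A rational polyhedral cone σ in a finite-dimensional ℚ-vector space V (generated by finitely many vectors with nonnegative rational coefficients) satisfies: the double dual (σ∨)∨ equals σ, where σ∨ = {ℓ ∈ V* | ℓ(v) ≥ 0 for all v ∈ σ}. -/
open scoped BigOperators

/-- The cone generated by a finite family of vectors: all nonnegative rational
combinations of the generators. -/
def coneGen {V : Type*} [AddCommGroup V] [Module ℚ V] {k : ℕ} (g : Fin k → V) : Set V :=
  {x | ∃ c : Fin k → ℚ, (∀ i, 0 ≤ c i) ∧ x = ∑ i, c i • g i}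

/-- A (rational) polyhedral cone: the set of nonnegative combinations of finitely many
vectors. -/
def IsPolyCone {V : Type*} [AddCommGroup V] [Module ℚ V] (σ : Set V) : Prop :=
  ∃ (k : ℕ) (g : Fin k → V), σ = coneGen g

/-- The dual cone inside the dual space: functionals nonnegative on `σ`. -/
def dualConeD {V : Type*} [AddCommGroup V] [Module ℚ V] (σ : Set V) :
    Set (Module.Dual ℚ V) :=
  {ℓ | ∀ v ∈ σ, 0 ≤ ℓ v}

/-!
The inclusion `σ ⊆ σ∨∨` is formal; the converse is Farkas' lemma, proved over any ordered field
by induction on the number of generators. If `v` lies outside the cone of `g₀, …, gₖ`, induction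
gives `ℓ` with `ℓ ≥ 0` on `g₁, …, gₖ` and `ℓ v < 0`. Either `ℓ g₀ ≥ 0` and we are done, or
`ℓ g₀ < 0`; then the projection `q` onto `ker ℓ` along `g₀` keeps `q v` outside the cone of the
`q gᵢ` (`i ≥ 1`), and a functional `m` separating them, composed with `q`, separates `v` from the
whole cone since `q g₀ = 0`.
-/

open Module PointedCone

namespace Module.Dual

variable {𝕜 V : Type*} [Field 𝕜] [AddCommGroup V] [Module 𝕜 V]

/-- The projection onto `ker ℓ` along `w`, provided `ℓ w ≠ 0`. -/
def projAlong (ℓ : Dual 𝕜 V) (w : V) : V →ₗ[𝕜] V :=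
  LinearMap.id - (ℓ w)⁻¹ • ℓ.smulRight w

lemma projAlong_apply (ℓ : Dual 𝕜 V) (w x : V) :
    ℓ.projAlong w x = x - ((ℓ w)⁻¹ * ℓ x) • w := by
  simp [projAlong, mul_smul]

lemma projAlong_self {ℓ : Dual 𝕜 V} {w : V} (hw : ℓ w ≠ 0) : ℓ.projAlong w w = 0 := by
  simp [projAlong_apply, hw]

end Module.Dual

section Farkas

variable {𝕜 V W : Type*} [Field 𝕜] [LinearOrder 𝕜] [IsStrictOrderedRing 𝕜]
  [AddCommGroup V] [Module 𝕜 V] [AddCommGroup W] [Module 𝕜 W]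

lemma PointedCone.hull_image (f : V →ₗ[𝕜] W) (t : Set V) :
    hull 𝕜 (f '' t) = (hull 𝕜 t).map f :=
  Submodule.span_image (f.restrictScalars {c : 𝕜 // 0 ≤ c})

lemma Module.Dual.apply_nonneg_of_mem_hull {ℓ : Dual 𝕜 V} {t : Set V} (ht : ∀ x ∈ t, 0 ≤ ℓ x)
    {x : V} (hx : x ∈ hull 𝕜 t) : 0 ≤ ℓ x :=
  (Submodule.span_le (p := (positive 𝕜 𝕜).comap ℓ)).2 ht hx

lemma Module.Dual.projAlong_notMem_hull_image {ℓ : Dual 𝕜 V} {w v : V} {t : Set V}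
    (ht : ∀ x ∈ t, 0 ≤ ℓ x) (hw : ℓ w < 0) (hv : ℓ v < 0) (hvt : v ∉ hull 𝕜 (insert w t)) :
    ℓ.projAlong w v ∉ hull 𝕜 (ℓ.projAlong w '' t) := by
  rw [hull_image]
  rintro ⟨z, (hz : z ∈ hull 𝕜 t), (hzv : ℓ.projAlong w z = ℓ.projAlong w v)⟩
  have hcoef : 0 ≤ (ℓ w)⁻¹ * (ℓ v - ℓ z) :=
    mul_nonneg_of_nonpos_of_nonpos (inv_lt_zero.2 hw).le
      (by linarith [ℓ.apply_nonneg_of_mem_hull ht hz])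
  have hvz : v = ((ℓ w)⁻¹ * (ℓ v - ℓ z)) • w + z := by
    rw [projAlong_apply, projAlong_apply] at hzv
    linear_combination (norm := module) -hzv
  exact hvt (Submodule.mem_span_insert.2 ⟨⟨_, hcoef⟩, z, hz, hvz⟩)

theorem exists_dual_nonneg_of_notMem_hull {k : ℕ} (g : Fin k → V) {v : V}
    (hv : v ∉ hull 𝕜 (Set.range g)) : ∃ ℓ : Dual 𝕜 V, (∀ i, 0 ≤ ℓ (g i)) ∧ ℓ v < 0 := by
  induction k generalizing v with
  | zero =>
    have hv0 : v ≠ 0 := fun h => hv (h ▸ zero_mem _)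
    obtain ⟨ℓ, hℓ⟩ := Projective.exists_dual_eq_one 𝕜 hv0
    exact ⟨-ℓ, finZeroElim, by simp [hℓ]⟩
  | succ k ih =>
    rw [Fin.range_fin_succ] at hv
    obtain ⟨ℓ, hℓg, hℓv⟩ :=
      ih (Fin.tail g) fun h => hv (Submodule.span_mono (Set.subset_insert _ _) h)
    obtain hw | hw := le_or_gt 0 (ℓ (g 0))
    · exact ⟨ℓ, Fin.forall_fin_succ.2 ⟨hw, hℓg⟩, hℓv⟩
    have hqv := ℓ.projAlong_notMem_hull_image (Set.forall_mem_range.2 hℓg) hw hℓv hv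
    rw [← Set.range_comp] at hqv
    obtain ⟨m, hmg, hmv⟩ := ih (ℓ.projAlong (g 0) ∘ Fin.tail g) hqv
    refine ⟨m ∘ₗ ℓ.projAlong (g 0), Fin.forall_fin_succ.2 ⟨?_, hmg⟩, hmv⟩
    simp [ℓ.projAlong_self hw.ne]

end Farkas

lemma coneGen_eq_hull {V : Type*} [AddCommGroup V] [Module ℚ V] {k : ℕ} (g : Fin k → V) :
    coneGen g = hull ℚ (Set.range g) := by
  ext x
  simp only [coneGen, Set.mem_ofPred_eq, SetLike.mem_coe, Submodule.mem_span_range_iff_exists_fun]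
  constructor
  · rintro ⟨c, hc, rfl⟩
    exact ⟨fun i => ⟨c i, hc i⟩, rfl⟩
  · rintro ⟨c, rfl⟩
    exact ⟨fun i => c i, fun i => (c i).2, rfl⟩

theorem stmt1_general {V : Type*} [AddCommGroup V] [Module ℚ V]
    (σ : Set V) (h : IsPolyCone σ) :
    {v : V | ∀ ℓ ∈ dualConeD σ, 0 ≤ ℓ v} = σ := by
  obtain ⟨k, g, rfl⟩ := h
  rw [coneGen_eq_hull]
  refine subset_antisymm (fun v hv => ?_) (fun v hv ℓ hℓ => hℓ v hv)
  by_contra hvg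
  obtain ⟨ℓ, hℓg, hℓv⟩ := exists_dual_nonneg_of_notMem_hull g hvg
  exact hℓv.not_ge (hv ℓ fun x => ℓ.apply_nonneg_of_mem_hull (Set.forall_mem_range.2 hℓg))

/-- The double dual of a polyhedral cone (computed inside `V ≅ V**`) equals the cone. -/
theorem stmt1 {V : Type*} [AddCommGroup V] [Module ℚ V] [FiniteDimensional ℚ V]
    (σ : Set V) (h : IsPolyCone σ) :
    {v : V | ∀ ℓ ∈ dualConeD σ, 0 ≤ ℓ v} = σ :=
  stmt1_general σ h
end

section
/- Let K be a reflexive Gorenstein cone of index r with complete splitting E∨ = {e₁∨,…,e_r∨} of K∨. Then each set Δ̃_i = {k ∈ K ∩ M̄ | e_i∨(k) = 1, e_j∨(k) = 0 for j ≠ i} is nonempty. -/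
/-!
A degree-one generator `m` of `K ∩ M̄` satisfies `∑ⱼ e_j∨(m) = ℓ∨(m) = 1` with nonnegative
integer summands, so it lies in `Δ̃_i` as soon as `e_i∨(m) ≠ 0`. If `Δ̃_i` were empty, `e_i∨`
would vanish on all generators, hence on all of `K ∩ M̄`. This contains the integral ray
generators of `K`, which span `M̄_ℝ` since `K` is full-dimensional; so `e_i∨ = 0`, which a
splitting excludes.
-/

open scoped BigOperators

/-- Cast a lattice vector to a real vector. -/
def castR {ι : Type*} (m : ι → ℤ) : ι → ℝ := fun i => (m i : ℝ)

/-- The cone generated by a finite family of real vectors. -/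
def coneGenR {V : Type*} [AddCommGroup V] [Module ℝ V] {k : ℕ} (g : Fin k → V) : Set V :=
  {x | ∃ c : Fin k → ℝ, (∀ i, 0 ≤ c i) ∧ x = ∑ i, c i • g i}

/-- The integral pairing on the lattice `M̄ = ι → ℤ` and its dual. -/
def pairZ {ι : Type*} [Fintype ι] (m n : ι → ℤ) : ℤ := ∑ i, m i * n i

/-- The dual cone of `K ⊆ M̄_ℝ`, inside `N̄_ℝ` (identified with `ι → ℝ` via the
standard pairing). -/
def dualConeR {ι : Type*} [Fintype ι] (K : Set (ι → ℝ)) : Set (ι → ℝ) :=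
  {n | ∀ m ∈ K, 0 ≤ ∑ i, m i * n i}

/-- The lattice points of a cone. -/
def latt {ι : Type*} [Fintype ι] (K : Set (ι → ℝ)) : Set (ι → ℤ) :=
  {m | castR m ∈ K}

/-- A reflexive Gorenstein cone `K ⊆ M̄_ℝ`, with distinguished lattice points
`ℓ ∈ K ∩ M̄` and `ℓ∨ ∈ K∨ ∩ N̄`: `K` is full-dimensional rational polyhedral, the monoid
of lattice points of `K` is generated by those on which `ℓ∨` takes the value `1`, and
dually for `K∨` and `ℓ`. -/
structure RefGor (ι : Type*) [Fintype ι] where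
  K : Set (ι → ℝ)
  poly : ∃ (k : ℕ) (g : Fin k → ι → ℤ), K = coneGenR fun i => castR (g i)
  fulldim : Submodule.span ℝ K = ⊤
  l : ι → ℤ
  lv : ι → ℤ
  l_mem : l ∈ latt K
  lv_mem : lv ∈ latt (dualConeR K)
  genK : ∀ m ∈ latt K,
    m ∈ AddSubmonoid.closure {m' | m' ∈ latt K ∧ pairZ m' lv = 1}
  genKv : ∀ n ∈ latt (dualConeR K),
    n ∈ AddSubmonoid.closure {n' | n' ∈ latt (dualConeR K) ∧ pairZ l n' = 1}

/-- The lattice points of the support `Δ̃ = {k ∈ K | ℓ∨(k) = 1}`. -/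
def RefGor.DeltaL {ι : Type*} [Fintype ι] (G : RefGor ι) : Set (ι → ℤ) :=
  {m | m ∈ latt G.K ∧ pairZ m G.lv = 1}

/-- The lattice points of `Δ̃_i = {k ∈ K | e_i∨(k) = 1, e_j∨(k) = 0 for j ≠ i}`. -/
def RefGor.DeltaI {ι : Type*} [Fintype ι] (G : RefGor ι) {r : ℕ}
    (e : Fin r → ι → ℤ) (i : Fin r) : Set (ι → ℤ) :=
  {m | m ∈ latt G.K ∧ pairZ m (e i) = 1 ∧ ∀ j, j ≠ i → pairZ m (e j) = 0}

/-- A complete splitting `E∨ = {e₁∨, …, e_r∨}` of the dual cone `K∨`: nonzero lattice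
points of `K∨` summing to `ℓ∨`. -/
def RefGor.IsDualSplitting {ι : Type*} [Fintype ι] (G : RefGor ι) {r : ℕ}
    (e : Fin r → ι → ℤ) : Prop :=
  (∀ i, e i ≠ 0 ∧ e i ∈ latt (dualConeR G.K)) ∧ ∑ i, e i = G.lv


open Finset Matrix

theorem Int.eq_one_and_eq_zero_of_sum_eq_one {α : Type*} [Fintype α] {f : α → ℤ}
    (hf : ∀ j, 0 ≤ f j) (hsum : ∑ j, f j = 1) {i : α} (hi : f i ≠ 0) :
    f i = 1 ∧ ∀ j ≠ i, f j = 0 := by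
  classical
  have hrest : ∑ j ∈ univ.erase i, f j = 1 - f i := by
    rw [← hsum, ← add_sum_erase _ _ (mem_univ i)]
    ring
  have hfi : f i = 1 := by
    have hrest_nonneg := sum_nonneg fun j (_ : j ∈ univ.erase i) => hf j
    have hfi_nonneg := hf i
    omega
  refine ⟨hfi, fun j hj => ?_⟩
  rw [hfi, sub_self, sum_eq_zero_iff_of_nonneg fun j _ => hf j] at hrest
  exact hrest j (mem_erase.2 ⟨hj, mem_univ j⟩)

theorem eq_zero_of_forall_dotProduct_eq_zero_of_span_eq_top {R ι : Type*} [CommSemiring R]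
    [Fintype ι] {K : Set (ι → R)} (hK : Submodule.span R K = ⊤) {v : ι → R}
    (h : ∀ x ∈ K, x ⬝ᵥ v = 0) : v = 0 := by
  have hker : Submodule.span R K ≤ LinearMap.ker ((dotProductBilin R R).flip v) :=
    Submodule.span_le.2 h
  rw [hK] at hker
  refine dotProduct_eq_zero v fun w => ?_
  rw [dotProduct_comm]
  exact hker Submodule.mem_top

theorem castR_injective {ι : Type*} : Function.Injective (castR : (ι → ℤ) → ι → ℝ) :=
  fun _ _ h => funext fun i => Int.cast_injective (congrFun h i)

theorem castR_zero {ι : Type*} : castR (0 : ι → ℤ) = 0 :=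
  funext fun _ => Int.cast_zero

theorem generator_mem_coneGenR {V : Type*} [AddCommGroup V] [Module ℝ V] {k : ℕ}
    (g : Fin k → V) (j : Fin k) : g j ∈ coneGenR g :=
  have : (0 : Fin k → ℝ) ≤ Pi.single j 1 := Pi.single_nonneg.2 zero_le_one
  ⟨Pi.single j 1, this, by simp⟩

section Lattice

variable {ι : Type*} [Fintype ι]

theorem castR_dotProduct_castR (m n : ι → ℤ) : castR m ⬝ᵥ castR n = pairZ m n := by
  simp [castR, pairZ, dotProduct]

theorem pairZ_nonneg {K : Set (ι → ℝ)} {m n : ι → ℤ} (hm : m ∈ latt K)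
    (hn : n ∈ latt (dualConeR K)) : 0 ≤ pairZ m n := by
  have h : 0 ≤ castR m ⬝ᵥ castR n := hn (castR m) hm
  exact_mod_cast castR_dotProduct_castR m n ▸ h

theorem pairZ_eq_zero_of_mem_closure {S : Set (ι → ℤ)} {n : ι → ℤ}
    (hS : ∀ s ∈ S, pairZ s n = 0) {m : ι → ℤ} (hm : m ∈ AddSubmonoid.closure S) :
    pairZ m n = 0 :=
  AddSubmonoid.closure_le (S := (LinearMap.ker ((dotProductBilin ℤ ℤ).flip n)).toAddSubmonoid)
    |>.2 hS hm

end Lattice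

namespace RefGor

variable {ι : Type*} [Fintype ι] (G : RefGor ι)

theorem exists_mem_latt_pairZ_ne_zero {n : ι → ℤ} (hn : n ≠ 0) :
    ∃ m ∈ latt G.K, pairZ m n ≠ 0 := by
  obtain ⟨k, g, hK⟩ := G.poly
  by_contra! h
  have hg : ∀ j, pairZ (g j) n = 0 := fun j =>
    h (g j) (show castR (g j) ∈ G.K from hK ▸ generator_mem_coneGenR _ j)
  refine hn (castR_injective (Eq.trans ?_ castR_zero.symm))
  refine eq_zero_of_forall_dotProduct_eq_zero_of_span_eq_top G.fulldim fun x hx => ?_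
  rw [hK] at hx
  obtain ⟨c, -, rfl⟩ := hx
  simp [sum_dotProduct, castR_dotProduct_castR, hg]

theorem mem_DeltaI_of_pairZ_ne_zero {r : ℕ} {e : Fin r → ι → ℤ} (he : G.IsDualSplitting e)
    {m : ι → ℤ} (hm : m ∈ G.DeltaL) {i : Fin r} (hmi : pairZ m (e i) ≠ 0) :
    m ∈ G.DeltaI e i := by
  have hsum : ∑ j, pairZ m (e j) = 1 := by
    rw [← hm.2, ← he.2]
    exact (dotProduct_sum m univ e).symm
  exact ⟨hm.1, Int.eq_one_and_eq_zero_of_sum_eq_one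
    (fun j => pairZ_nonneg hm.1 (he.1 j).2) hsum hmi⟩

end RefGor

theorem stmt3_general {ι : Type*} [Fintype ι] (G : RefGor ι) (r : ℕ)
    (e : Fin r → ι → ℤ) (he : G.IsDualSplitting e) :
    ∀ i, (G.DeltaI e i).Nonempty := by
  intro i
  obtain ⟨m, hmK, hm⟩ := G.exists_mem_latt_pairZ_ne_zero (he.1 i).1
  obtain ⟨m', hm'Δ, hm'⟩ : ∃ m' ∈ G.DeltaL, pairZ m' (e i) ≠ 0 := by
    by_contra! h
    exact hm (pairZ_eq_zero_of_mem_closure h (G.genK m hmK))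
  exact ⟨m', G.mem_DeltaI_of_pairZ_ne_zero he hm'Δ hm'⟩

/-- Each set `Δ̃_i` is nonempty. -/
theorem stmt3 {ι : Type*} [Fintype ι] (G : RefGor ι) (r : ℕ)
    (hr : pairZ G.l G.lv = r) (e : Fin r → ι → ℤ) (he : G.IsDualSplitting e) :
    ∀ i, (G.DeltaI e i).Nonempty :=
  stmt3_general G r e he
end

section
/- Let K ⊆ M̄_ℝ be a reflexive Gorenstein cone with complete splitting E∨ of K∨, and let Δ̃ = {k ∈ K | ℓ∨(k) = 1}, Δ̃_i as above. Then every vertex of the convex polytope Δ̃_i (the convex hull of its integral points) is a vertex of Δ̃; equivalently, no point of Δ̃_i can be written as a convex combination of points of Δ̃ in which some point p with e_i∨(p) = 0 appears with positive coefficient. -/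
open scoped BigOperators

/-- The real pairing of a lattice functional against a real vector. -/
def pairRZ {ι : Type*} [Fintype ι] (n : ι → ℤ) (x : ι → ℝ) : ℝ :=
  ∑ i, (n i : ℝ) * x i

/-- The support polytope `Δ̃ = {x ∈ K | ℓ∨(x) = 1}`. -/
def RefGor.DeltaR {ι : Type*} [Fintype ι] (G : RefGor ι) : Set (ι → ℝ) :=
  {x | x ∈ G.K ∧ pairRZ G.lv x = 1}

/-- The piece `Δ̃_i = {x ∈ Δ̃ | e_i∨(x) = 1, e_j∨(x) = 0 for j ≠ i}`. -/
def RefGor.DeltaIR {ι : Type*} [Fintype ι] (G : RefGor ι) {r : ℕ}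
    (e : Fin r → ι → ℤ) (i : Fin r) : Set (ι → ℝ) :=
  {x | x ∈ G.K ∧ pairRZ G.lv x = 1 ∧ pairRZ (e i) x = 1 ∧
    ∀ j, j ≠ i → pairRZ (e j) x = 0}

/-- No point of `Δ̃_i` can be written as a convex combination of points of `Δ̃` in which
a point `p` with `e_i∨(p) = 0` appears with positive coefficient; hence every vertex of
`Δ̃_i` is a vertex of `Δ̃`. -/
theorem stmt7 {ι : Type*} [Fintype ι] (G : RefGor ι) (r : ℕ)
    (hr : pairZ G.l G.lv = r) (e : Fin r → ι → ℤ) (he : G.IsDualSplitting e) :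
    ∀ i, ∀ x ∈ G.DeltaIR e i, ∀ (s : ℕ) (t : Fin s → ℝ) (p : Fin s → ι → ℝ),
      (∀ j, 0 ≤ t j) → ∑ j, t j = 1 → (∀ j, p j ∈ G.DeltaR) →
      x = ∑ j, t j • p j → ∀ j, 0 < t j → pairRZ (e i) (p j) ≠ 0 := by
  intro i x hx s t p ht hts hp hxs j0 htj0 hzero
  -- each e k is nonnegative on points of K
  have hnn : ∀ (k : Fin r) (y : ι → ℝ), y ∈ G.K → 0 ≤ pairRZ (e k) y := by
    intro k y hy
    have h := (he.1 k).2 y hy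
    simpa [pairRZ, castR, mul_comm] using h
  -- pairRZ is additive in the functional argument over sums
  have hsumfun : ∀ y : ι → ℝ, pairRZ G.lv y = ∑ k, pairRZ (e k) y := by
    intro y
    rw [← he.2]
    simp only [pairRZ, Finset.sum_apply, Int.cast_sum, Finset.sum_mul]
    rw [Finset.sum_comm]
  -- each p j satisfies pairRZ (e i) (p j) ≤ 1
  have hle1 : ∀ j, pairRZ (e i) (p j) ≤ 1 := by
    intro j
    have h1 : pairRZ G.lv (p j) = 1 := (hp j).2
    rw [hsumfun] at h1
    calc pairRZ (e i) (p j) ≤ ∑ k, pairRZ (e k) (p j) :=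
          Finset.single_le_sum (fun k _ => hnn k (p j) (hp j).1) (Finset.mem_univ i)
      _ = 1 := h1
  -- pairRZ (e i) x = ∑ j, t j * pairRZ (e i) (p j)
  have hlin : pairRZ (e i) x = ∑ j, t j * pairRZ (e i) (p j) := by
    subst hxs
    simp only [pairRZ, Finset.mul_sum, Finset.sum_apply, Pi.smul_apply,
      smul_eq_mul]
    rw [Finset.sum_comm]
    exact Finset.sum_congr rfl fun j _ => Finset.sum_congr rfl fun a _ => by ring
  have hx1 : pairRZ (e i) x = 1 := hx.2.2.1
  have hlt : ∑ j, t j * pairRZ (e i) (p j) < ∑ j, t j * 1 := by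
    apply Finset.sum_lt_sum
    · intro j _
      exact mul_le_mul_of_nonneg_left (hle1 j) (ht j)
    · exact ⟨j0, Finset.mem_univ j0, by rw [hzero]; simpa using htj0⟩
  rw [← hlin, hx1] at hlt
  simp [hts] at hlt
end

section
/- Let f₁,…,f_k be smooth functions on a smooth manifold X, let V(f) = {p | f₁(p) = ⋯ = f_k(p) = 0} and U(df) = {p | df₁|_p, …, df_k|_p are linearly independent}. Suppose ψ and ψ' are smooth n-forms on X with df₁ ∧ ⋯ ∧ df_k ∧ ψ = df₁ ∧ ⋯ ∧ df_k ∧ ψ'. Then at every point p ∈ U(df) ∩ V(f), the pullbacks of ψ and ψ' to the submanifold V(f) ∩ U(df) agree; consequently ∫_γ ψ = ∫_γ ψ' for any smooth singular n-simplex γ : Δⁿ → V(f) such that γ⁻¹(U(df)) is dense in Δⁿ. -/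
open scoped BigOperators
open MeasureTheory

noncomputable section

variable {E : Type*} [NormedAddCommGroup E] [NormedSpace ℝ E]

/-- The wedge `df₁ ∧ ⋯ ∧ df_k` of a family of `1`-forms (continuous linear functionals),
as the alternating map `(v₁, …, v_k) ↦ det (L_i v_j)`. -/
def oneFormsWedge {k : ℕ} (L : Fin k → (E →L[ℝ] ℝ)) : AlternatingMap ℝ E ℝ (Fin k) :=
  (Matrix.detRowAlternating : AlternatingMap ℝ (Fin k → ℝ) ℝ (Fin k)).compLinearMap
    (LinearMap.pi fun i => (L i : E →ₗ[ℝ] ℝ))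

/-- The wedge product of a `k`-form and an `m`-form. -/
def wedge {k m : ℕ} (α : AlternatingMap ℝ E ℝ (Fin k)) (β : AlternatingMap ℝ E ℝ (Fin m)) :
    AlternatingMap ℝ E ℝ (Fin (k + m)) :=
  ((TensorProduct.lid ℝ ℝ).toLinearMap.compAlternatingMap (α.domCoprod β)).domDomCongr
    finSumFinEquiv

/-- A smooth differential `m`-form on `E`. -/
def SmoothForm {m : ℕ} (ψ : E → AlternatingMap ℝ E ℝ (Fin m)) : Prop :=
  ∀ v : Fin m → E, ContDiff ℝ (⊤ : ℕ∞) fun x => ψ x v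

/-- The standard `n`-simplex `Δⁿ ⊆ ℝⁿ`. -/
def stdSimp (n : ℕ) : Set (Fin n → ℝ) := {x | (∀ i, 0 ≤ x i) ∧ ∑ i, x i ≤ 1}

open Equiv in
/-- Evaluation of `(df₁ ∧ ⋯ ∧ df_k) ∧ β` at `(u₁, …, u_k, v₁, …, v_n)` where the `uⱼ` form a
dual family to the `Lᵢ` and the `vⱼ` are killed by all `Lᵢ`. -/
theorem wedge_append_eq {k n : ℕ} (L : Fin k → (E →L[ℝ] ℝ)) (β : AlternatingMap ℝ E ℝ (Fin n))
    (u : Fin k → E) (hu : ∀ i j, L i (u j) = if i = j then 1 else 0)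
    (v : Fin n → E) (hv : ∀ i j, L i (v j) = 0) :
    wedge (oneFormsWedge L) β (Fin.append u v) = β v := by
  classical
  have hW : ∀ s : Fin k ⊕ Fin n, Fin.append u v (finSumFinEquiv s) = Sum.elim u v s := by
    rintro (i | j)
    · simp
    · simp
  have hα0 : ∀ x : Fin k → E, (∃ i₀, ∃ j₀, x i₀ = v j₀) → oneFormsWedge L x = 0 := by
    rintro x ⟨i₀, j₀, hx⟩
    have : oneFormsWedge L x = Matrix.det (Matrix.of fun i j => L j (x i)) := rfl
    rw [this]
    apply Matrix.det_eq_zero_of_row_eq_zero i₀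
    intro j
    simp [hx, hv]
  have hα1 : oneFormsWedge L u = 1 := by
    have : oneFormsWedge L u = Matrix.det (Matrix.of fun i j => L j (u i)) := rfl
    rw [this]
    have : (Matrix.of fun i j => L j (u i)) = (1 : Matrix (Fin k) (Fin k) ℝ) := by
      ext i j
      simp [hu, Matrix.one_apply, eq_comm]
    rw [this, Matrix.det_one]
  rw [wedge]
  simp only [AlternatingMap.domDomCongr_apply, LinearMap.compAlternatingMap_apply,
    AlternatingMap.domCoprod_apply, MultilinearMap.sum_apply, map_sum]
  rw [show Fin.append u v ∘ ⇑finSumFinEquiv = Sum.elim u v from funext hW]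
  refine (Finset.sum_eq_single_of_mem
      (f := fun σ : Equiv.Perm.ModSumCongr (Fin k) (Fin n) =>
        (TensorProduct.lid ℝ ℝ) ((AlternatingMap.domCoprod.summand (oneFormsWedge L) β σ)
          (Sum.elim u v)))
      (Quotient.mk'' 1) (Finset.mem_univ _) ?_).trans ?_
  · intro q _ hq
    induction q using Quotient.inductionOn' with
    | h σ =>
      rw [AlternatingMap.domCoprod.summand_mk'']
      by_cases hmaps : Set.MapsTo σ (Set.range Sum.inl) (Set.range Sum.inl)
      · exfalso
        apply hq
        have hmem := Equiv.Perm.mem_sumCongrHom_range_of_perm_mapsTo_inl hmaps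
        exact Quotient.sound' (QuotientGroup.leftRel_apply.mpr (by simpa using inv_mem hmem))
      · simp only [Set.MapsTo, not_forall] at hmaps
        obtain ⟨x, hx, hσx⟩ := hmaps
        obtain ⟨i₀, rfl⟩ := hx
        obtain hcase | ⟨j₀, hj⟩ : (∃ i', σ (Sum.inl i₀) = Sum.inl i') ∨
            (∃ j₀, σ (Sum.inl i₀) = Sum.inr j₀) := by
          cases h : σ (Sum.inl i₀) with
          | inl i' => exact Or.inl ⟨i', rfl⟩
          | inr j' => exact Or.inr ⟨j', rfl⟩
        · obtain ⟨i', hi'⟩ := hcase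
          exact absurd ⟨_, hi'.symm⟩ hσx
        · have hz : (oneFormsWedge L) (fun i => Sum.elim u v (σ (Sum.inl i))) = 0 :=
            hα0 _ ⟨i₀, j₀, by rw [hj]; rfl⟩
          have hzero : (Equiv.Perm.sign σ •
              (MultilinearMap.domCoprod (↑(oneFormsWedge L)) (↑β)).domDomCongr σ :
                MultilinearMap ℝ (fun _ : Fin k ⊕ Fin n => E) (TensorProduct ℝ ℝ ℝ))
              (Sum.elim u v) = 0 := by
            simp [MultilinearMap.domDomCongr_apply, MultilinearMap.domCoprod_apply, hz]
          rw [hzero]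
          exact (TensorProduct.lid ℝ ℝ).map_zero
  · rw [AlternatingMap.domCoprod.summand_mk'']
    simp [hα1]

/-- Linearly independent continuous linear functionals admit a dual family of vectors. -/
theorem exists_dual_family {k : ℕ} [FiniteDimensional ℝ E] (L : Fin k → (E →L[ℝ] ℝ))
    (hL : LinearIndependent ℝ L) :
    ∃ u : Fin k → E, ∀ i j, L i (u j) = if i = j then 1 else 0 := by
  classical
  set Φ : E →ₗ[ℝ] (Fin k → ℝ) := LinearMap.pi fun i => (L i : E →ₗ[ℝ] ℝ) with hΦ
  have hsurj : Function.Surjective Φ := by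
    rw [← LinearMap.range_eq_top]
    by_contra hne
    obtain ⟨g, hg0, hg⟩ := (LinearMap.range Φ).exists_dual_map_eq_bot_of_lt_top
      (lt_top_iff_ne_top.mpr hne) inferInstance
    set c : Fin k → ℝ := fun i => g (Pi.single i 1) with hc
    have hgc : ∀ y : Fin k → ℝ, g y = ∑ i, y i • c i := by
      intro y
      have h := g.pi_apply_eq_sum_univ y
      refine h.trans (Finset.sum_congr rfl fun i _ => ?_)
      congr 1
      congr 1
      ext j
      simp [Pi.single_apply, eq_comm]
    have hcL : ∑ i, c i • L i = 0 := by
      ext x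
      have hx : Φ x ∈ LinearMap.range Φ := LinearMap.mem_range_self _ x
      have : g (Φ x) = 0 := by
        have := hg ▸ Submodule.mem_map_of_mem (f := g) hx
        simpa using this
      rw [hgc] at this
      simpa [Φ, mul_comm] using this
    have : ∀ i, c i = 0 := Fintype.linearIndependent_iff.mp hL c hcL
    apply hg0
    apply LinearMap.ext
    intro y
    rw [hgc]
    simp [this]
  choose u hu using fun j => hsurj (Pi.single j 1)
  refine ⟨u, fun i j => ?_⟩
  have := congrFun (hu j) i
  simpa [Φ, Pi.single_apply, eq_comm] using this

/-- Continuity of the integrand of the pullback of a smooth form along a smooth map. -/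
theorem integrand_continuous {n m : ℕ} [FiniteDimensional ℝ E]
    (ψ : E → AlternatingMap ℝ E ℝ (Fin n)) (hψ : SmoothForm ψ)
    {γ : (Fin m → ℝ) → E} (hγ : ContDiff ℝ (⊤ : ℕ∞) γ) (c : Fin n → (Fin m → ℝ)) :
    Continuous fun x => ψ (γ x) (fun j => fderiv ℝ γ x (c j)) := by
  classical
  set d := Module.finrank ℝ E with hd
  set b := Module.finBasis ℝ E with hb
  have hdf : Continuous (fderiv ℝ γ) := (hγ.fderiv_right (m := (⊤ : ℕ∞)) (by simp)).continuous
  have hvc : ∀ w, Continuous fun x => fderiv ℝ γ x w := fun w =>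
    hdf.clm_apply continuous_const
  have hexp : ∀ x, ψ (γ x) (fun j => fderiv ℝ γ x (c j)) =
      ∑ r : Fin n → Fin d, (∏ j, b.repr (fderiv ℝ γ x (c j)) (r j)) •
        ψ (γ x) (fun j => b (r j)) := by
    intro x
    conv_lhs => rw [show (fun j => fderiv ℝ γ x (c j)) =
      fun j => ∑ i, b.repr (fderiv ℝ γ x (c j)) i • b i from
        funext fun j => (b.sum_repr _).symm]
    rw [show ψ (γ x) (fun j => ∑ i, b.repr (fderiv ℝ γ x (c j)) i • b i) =
        (ψ (γ x) : MultilinearMap ℝ (fun _ : Fin n => E) ℝ)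
          (fun j => ∑ i, b.repr (fderiv ℝ γ x (c j)) i • b i) from rfl]
    rw [MultilinearMap.map_sum]
    refine Finset.sum_congr rfl fun r _ => ?_
    exact (ψ (γ x) : MultilinearMap ℝ (fun _ : Fin n => E) ℝ).map_smul_univ _ _
  rw [show (fun x => ψ (γ x) (fun j => fderiv ℝ γ x (c j))) =
    fun x => ∑ r : Fin n → Fin d, (∏ j, b.repr (fderiv ℝ γ x (c j)) (r j)) •
        ψ (γ x) (fun j => b (r j)) from funext hexp]
  refine continuous_finset_sum _ fun r _ => Continuous.fun_smul ?_ ?_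
  · refine continuous_finset_prod _ fun j _ => ?_
    have hlin : Continuous fun y : E => b.repr y (r j) := by
      have : (fun y : E => b.repr y (r j)) =
          ((Finsupp.lapply (r j) : (Fin d →₀ ℝ) →ₗ[ℝ] ℝ).comp
            (b.repr : E ≃ₗ[ℝ] (Fin d →₀ ℝ)).toLinearMap) := rfl
      rw [this]
      exact LinearMap.continuous_of_finiteDimensional _
    exact hlin.comp (hvc (c j))
  · exact (hψ fun j => b (r j)).continuous.comp hγ.continuous

theorem stdSimp_convex (n : ℕ) : Convex ℝ (stdSimp n) := by
  intro x hx y hy a b ha hb hab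
  refine ⟨fun i => ?_, ?_⟩
  · have := hx.1 i
    have := hy.1 i
    simp only [Pi.add_apply, Pi.smul_apply, smul_eq_mul]
    nlinarith
  · have h1 : ∑ i, (a • x + b • y) i = a * ∑ i, x i + b * ∑ i, y i := by
      simp [Finset.sum_add_distrib, Finset.mul_sum]
    rw [h1]
    nlinarith [hx.2, hy.2]

theorem stdSimp_isClosed (n : ℕ) : IsClosed (stdSimp n) := by
  have : stdSimp n = (⋂ i, {x : Fin n → ℝ | 0 ≤ x i}) ∩ {x | ∑ i, x i ≤ 1} := by
    ext x; simp [stdSimp]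
  rw [this]
  exact (isClosed_iInter fun i => isClosed_le continuous_const (continuous_apply i)).inter
    (isClosed_le (continuous_finset_sum _ fun i _ => continuous_apply i) continuous_const)

/-- If `df₁ ∧ ⋯ ∧ df_k ∧ ψ = df₁ ∧ ⋯ ∧ df_k ∧ ψ'`, then at every point of
`U(df) ∩ V(f)` the pullbacks of `ψ` and `ψ'` to the submanifold `V(f)` agree (i.e. they
agree on tangent vectors killed by all `df_i`); consequently `∫_γ ψ = ∫_γ ψ'` for every
smooth singular `n`-simplex `γ` with image in `V(f)` such that `γ⁻¹(U(df))` is dense in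
`Δⁿ`. -/
theorem stmt10 [FiniteDimensional ℝ E] (n k : ℕ)
    (f : Fin k → E → ℝ) (hf : ∀ i, ContDiff ℝ (⊤ : ℕ∞) (f i))
    (ψ ψ' : E → AlternatingMap ℝ E ℝ (Fin n))
    (hψ : SmoothForm ψ) (hψ' : SmoothForm ψ')
    (heq : ∀ x : E, wedge (oneFormsWedge fun i => fderiv ℝ (f i) x) (ψ x) =
      wedge (oneFormsWedge fun i => fderiv ℝ (f i) x) (ψ' x)) :
    (∀ p : E, (∀ i, f i p = 0) → (LinearIndependent ℝ fun i => fderiv ℝ (f i) p) →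
      ∀ v : Fin n → E, (∀ j i, fderiv ℝ (f i) p (v j) = 0) → ψ p v = ψ' p v) ∧
    ∀ γ : (Fin n → ℝ) → E, ContDiff ℝ (⊤ : ℕ∞) γ →
      (∀ x ∈ stdSimp n, ∀ i, f i (γ x) = 0) →
      stdSimp n ⊆
        closure {x | x ∈ stdSimp n ∧ LinearIndependent ℝ fun i => fderiv ℝ (f i) (γ x)} →
      ∫ x in stdSimp n, ψ (γ x) (fun j => fderiv ℝ γ x (Pi.single j 1)) =
        ∫ x in stdSimp n, ψ' (γ x) (fun j => fderiv ℝ γ x (Pi.single j 1)) := by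
  classical
  have part1 : ∀ p : E, (∀ i, f i p = 0) → (LinearIndependent ℝ fun i => fderiv ℝ (f i) p) →
      ∀ v : Fin n → E, (∀ j i, fderiv ℝ (f i) p (v j) = 0) → ψ p v = ψ' p v := by
    intro p _ hind v hv
    obtain ⟨u, hu⟩ := exists_dual_family _ hind
    have h1 := wedge_append_eq _ (ψ p) u hu v (fun i j => hv j i)
    have h2 := wedge_append_eq _ (ψ' p) u hu v (fun i j => hv j i)
    rw [← h1, ← h2, heq p]
  refine ⟨part1, ?_⟩
  intro γ hγ hγ0 hdense
  set g := fun x => ψ (γ x) (fun j => fderiv ℝ γ x (Pi.single j 1)) with hgdef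
  set g' := fun x => ψ' (γ x) (fun j => fderiv ℝ γ x (Pi.single j 1)) with hgdef'
  have hgc : Continuous g := integrand_continuous ψ hψ hγ _
  have hgc' : Continuous g' := integrand_continuous ψ' hψ' hγ _
  set S := {x | x ∈ stdSimp n ∧ LinearIndependent ℝ fun i => fderiv ℝ (f i) (γ x)} with hS
  have hEq1 : Set.EqOn g g' (interior (stdSimp n) ∩ S) := by
    rintro x ⟨hxi, hxS⟩
    apply part1 (γ x) (fun i => hγ0 x hxS.1 i) hxS.2
    intro j i
    have hnb : stdSimp n ∈ nhds x := mem_interior_iff_mem_nhds.mp hxi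
    have hev : (fun y => f i (γ y)) =ᶠ[nhds x] fun _ => (0 : ℝ) := by
      filter_upwards [hnb] with y hy using hγ0 y hy i
    have h0 : fderiv ℝ (fun y => f i (γ y)) x = 0 := by
      rw [hev.fderiv_eq]
      exact fderiv_const_apply 0
    have hcomp : fderiv ℝ (fun y => f i (γ y)) x =
        (fderiv ℝ (f i) (γ x)).comp (fderiv ℝ γ x) :=
      fderiv_comp x ((hf i).differentiable (by simp)).differentiableAt
        (hγ.differentiable (by simp)).differentiableAt
    have hz : (fderiv ℝ (f i) (γ x)).comp (fderiv ℝ γ x) = 0 := by rw [← hcomp, h0]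
    calc fderiv ℝ (f i) (γ x) (fderiv ℝ γ x (Pi.single j 1))
        = ((fderiv ℝ (f i) (γ x)).comp (fderiv ℝ γ x)) (Pi.single j 1) := rfl
      _ = 0 := by rw [hz]; rfl
  have hsub : interior (stdSimp n) ⊆ closure (interior (stdSimp n) ∩ S) := by
    intro x hx
    have h1 : x ∈ interior (stdSimp n) ∩ closure S :=
      ⟨hx, hdense (interior_subset hx)⟩
    exact isOpen_interior.inter_closure h1
  have hEq : Set.EqOn g g' (interior (stdSimp n)) := fun x hx =>
    (hEq1.closure hgc hgc') (hsub hx)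
  have hfront : volume (stdSimp n \ interior (stdSimp n)) = 0 := by
    have hss : stdSimp n \ interior (stdSimp n) ⊆ frontier (stdSimp n) :=
      fun x hx => ⟨subset_closure hx.1, hx.2⟩
    exact measure_mono_null hss ((stdSimp_convex n).addHaar_frontier volume)
  apply setIntegral_congr_ae (stdSimp_isClosed n).measurableSet
  filter_upwards [measure_eq_zero_iff_ae_notMem.mp hfront] with x hx hxs
  refine hEq ?_
  by_contra hni
  exact hx ⟨hxs, hni⟩

end
end

section
/- Let Σ be a fan in N and D = Σ_ρ a_ρ D_ρ a Cartier divisor on the associated toric variety, meaning for each cone σ ∈ Σ there is a homomorphism a_σ : N ∩ span(σ) → ℤ with a_σ(u_ρ) = a_ρ for all rays ρ ⊆ σ. For σ ∈ Σ define the lifted cone σ̂₀ ⊆ (N ⊕ ℤ)_ℚ generated by {(u_ρ, a_ρ) | ρ ∈ σ(1)} and the over cone σ̂ = σ̂₀ + ℚ_{≥0}·(0,1). Then: (a) σ̂₀ is a face of σ̂; (b) the collection of all cones σ̂₀, σ̂ for σ ∈ Σ, together with their faces, forms a fan in N ⊕ ℤ. -/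
open scoped BigOperators

/-- The canonical map from lattice vectors to rational vectors. -/
def castQ {ι : Type*} (n : ι → ℤ) : ι → ℚ := fun i => (n i : ℚ)

/-- `τ` is a face of `σ`: cut out by a linear functional nonnegative on `σ`. -/
def IsFaceOf {V : Type*} [AddCommGroup V] [Module ℚ V] (τ σ : Set V) : Prop :=
  ∃ ℓ : V →ₗ[ℚ] ℚ, (∀ v ∈ σ, 0 ≤ ℓ v) ∧ τ = {v ∈ σ | ℓ v = 0}

/-- A rational polyhedral cone: generated by finitely many lattice vectors. -/
def IsRatCone {ι : Type*} (σ : Set (ι → ℚ)) : Prop :=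
  ∃ (k : ℕ) (g : Fin k → ι → ℤ), σ = coneGen fun i => castQ (g i)

/-- A fan of strongly convex rational polyhedral cones in `N_ℚ = ι → ℚ`. -/
structure TFan (ι : Type*) where
  cones : Set (Set (ι → ℚ))
  rat : ∀ σ ∈ cones, IsRatCone σ
  strconv : ∀ σ ∈ cones, σ ∩ (-σ) ⊆ {0}
  face_mem : ∀ σ ∈ cones, ∀ τ, IsFaceOf τ σ → τ ∈ cones
  inter_face : ∀ σ ∈ cones, ∀ σ' ∈ cones, IsFaceOf (σ ∩ σ') σ

/-- The support of a fan: the union of its cones. -/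
def TFan.support {ι : Type*} (F : TFan ι) : Set (ι → ℚ) := ⋃₀ F.cones

/-- `ρ` is a ray (one-dimensional cone) of the fan `F`. -/
def TFan.IsRayOf {ι : Type*} (F : TFan ι) (ρ : Set (ι → ℚ)) : Prop :=
  ρ ∈ F.cones ∧ ∃ v : ι → ℚ, v ≠ 0 ∧ ρ = coneGen ![v]

/-- `u` is the primitive integral generator of the ray `ρ`. -/
def IsPrimGen {ι : Type*} (ρ : Set (ι → ℚ)) (u : ι → ℤ) : Prop :=
  castQ u ∈ ρ ∧ ∀ n : ι → ℤ, castQ n ∈ ρ → ∃ k : ℕ, n = k • u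

/-- The cone generated by an arbitrary set of vectors: union of the cones generated
by its finite subfamilies. -/
def coneOf {V : Type*} [AddCommGroup V] [Module ℚ V] (S : Set V) : Set V :=
  {x | ∃ (k : ℕ) (g : Fin k → V), (∀ i, g i ∈ S) ∧ x ∈ coneGen g}

/-- The lifted ray generators `(u_ρ, a_ρ)` for the rays `ρ` of `σ`. -/
def raySet {ι : Type*} (F : TFan ι) (a : Set (ι → ℚ) → ℤ) (σ : Set (ι → ℚ)) :
    Set ((ι → ℚ) × ℚ) :=
  {x | ∃ ρ u, F.IsRayOf ρ ∧ ρ ⊆ σ ∧ IsPrimGen ρ u ∧ x = (castQ u, (a ρ : ℚ))}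

/-- The lifted cone `σ̂₀`, generated by `{(u_ρ, a_ρ) | ρ ∈ σ(1)}`. -/
def liftCone {ι : Type*} (F : TFan ι) (a : Set (ι → ℚ) → ℤ) (σ : Set (ι → ℚ)) :
    Set ((ι → ℚ) × ℚ) :=
  coneOf (raySet F a σ)

/-- The over cone `σ̂ = σ̂₀ + ℚ_{≥0}·(0,1)`. -/
def overCone {ι : Type*} (F : TFan ι) (a : Set (ι → ℚ) → ℤ) (σ : Set (ι → ℚ)) :
    Set ((ι → ℚ) × ℚ) :=
  coneOf (raySet F a σ ∪ {((0 : ι → ℚ), (1 : ℚ))})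

/-- A rational polyhedral cone in `(N ⊕ ℤ)_ℚ`. -/
def IsRatConeP {ι : Type*} (σ : Set ((ι → ℚ) × ℚ)) : Prop :=
  ∃ (k : ℕ) (g : Fin k → (ι → ℤ) × ℤ),
    σ = coneGen fun i => ((castQ (g i).1, ((g i).2 : ℚ)) : (ι → ℚ) × ℚ)

section ConeBasics

variable {V : Type*} [AddCommGroup V] [Module ℚ V]

lemma coneGen_zero_mem {k : ℕ} (g : Fin k → V) : (0 : V) ∈ coneGen g :=
  ⟨0, fun _ => le_refl 0, by simp⟩

lemma coneGen_self_mem {k : ℕ} (g : Fin k → V) (i : Fin k) : g i ∈ coneGen g := by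
  refine ⟨fun j => if j = i then 1 else 0, fun j => by positivity, ?_⟩
  simp [ite_smul]

lemma coneGen_add {k : ℕ} {g : Fin k → V} {x y : V} (hx : x ∈ coneGen g)
    (hy : y ∈ coneGen g) : x + y ∈ coneGen g := by
  obtain ⟨c, hc, rfl⟩ := hx
  obtain ⟨d, hd, rfl⟩ := hy
  exact ⟨c + d, fun i => add_nonneg (hc i) (hd i), by
    simp [add_smul, Finset.sum_add_distrib]⟩

lemma coneGen_smul {k : ℕ} {g : Fin k → V} {x : V} {q : ℚ} (hq : 0 ≤ q)
    (hx : x ∈ coneGen g) : q • x ∈ coneGen g := by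
  obtain ⟨c, hc, rfl⟩ := hx
  exact ⟨q • c, fun i => mul_nonneg hq (hc i), by
    simp [Finset.smul_sum, smul_smul]⟩

lemma coneGen_sum_mem {k : ℕ} {g : Fin k → V} {α : Type*} (s : Finset α) (f : α → V)
    (hf : ∀ i ∈ s, f i ∈ coneGen g) : ∑ i ∈ s, f i ∈ coneGen g :=
  Finset.sum_induction f _ (fun _ _ => coneGen_add) (coneGen_zero_mem g) hf

lemma nonneg_on_coneGen {k : ℕ} {g : Fin k → V} (ℓ : V →ₗ[ℚ] ℚ)
    (h : ∀ i, 0 ≤ ℓ (g i)) : ∀ v ∈ coneGen g, 0 ≤ ℓ v := by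
  rintro v ⟨c, hc, rfl⟩
  rw [map_sum]
  exact Finset.sum_nonneg fun i _ => by
    rw [map_smul, smul_eq_mul]; exact mul_nonneg (hc i) (h i)

/-- Lemma K : a point of the cone killed by a functional nonnegative on the generators
has a representation supported on generators killed by the functional. -/
lemma exists_rep_of_apply_eq_zero {k : ℕ} {g : Fin k → V} (ℓ : V →ₗ[ℚ] ℚ)
    (h : ∀ i, 0 ≤ ℓ (g i)) {v : V} (hv : v ∈ coneGen g) (h0 : ℓ v = 0) :
    ∃ c : Fin k → ℚ, (∀ i, 0 ≤ c i) ∧ (∀ i, c i ≠ 0 → ℓ (g i) = 0) ∧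
      v = ∑ i, c i • g i := by
  obtain ⟨c, hc, rfl⟩ := hv
  refine ⟨c, hc, fun i hi => ?_, rfl⟩
  rw [map_sum] at h0
  simp only [map_smul, smul_eq_mul] at h0
  have := (Finset.sum_eq_zero_iff_of_nonneg
    (fun j _ => mul_nonneg (hc j) (h j))).mp h0 i (Finset.mem_univ i)
  rcases mul_eq_zero.mp this with h' | h'
  · exact absurd h' hi
  · exact h'

/-- A face of a finitely generated cone is the cone on the generators killed by the
functional (with the others replaced by `0`). -/
lemma face_eq_coneGen_ite {k : ℕ} {g : Fin k → V} (ℓ : V →ₗ[ℚ] ℚ)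
    (h : ∀ i, 0 ≤ ℓ (g i)) :
    {v ∈ coneGen g | ℓ v = 0} = coneGen (fun i => if ℓ (g i) = 0 then g i else 0) := by
  classical
  ext v
  constructor
  · rintro ⟨hv, h0⟩
    obtain ⟨c, hc, hsupp, rfl⟩ := exists_rep_of_apply_eq_zero ℓ h hv h0
    refine ⟨c, hc, Finset.sum_congr rfl fun i _ => ?_⟩
    by_cases hci : c i = 0
    · simp [hci]
    · simp only [if_pos (hsupp i hci)]
  · rintro ⟨c, hc, rfl⟩
    constructor
    · refine ⟨fun i => if ℓ (g i) = 0 then c i else 0,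
        fun i => by by_cases hi : ℓ (g i) = 0 <;> simp [hi, hc i], ?_⟩
      refine Finset.sum_congr rfl fun i _ => ?_
      by_cases hi : ℓ (g i) = 0 <;> simp [hi]
    · rw [map_sum]
      refine Finset.sum_eq_zero fun i _ => ?_
      by_cases hi : ℓ (g i) = 0 <;> simp [hi]

lemma isFaceOf_self (σ : Set V) : IsFaceOf σ σ :=
  ⟨0, by simp, by simp⟩

lemma IsFaceOf.subset {τ σ : Set V} (h : IsFaceOf τ σ) : τ ⊆ σ := by
  obtain ⟨ℓ, -, rfl⟩ := h
  exact Set.sep_subset _ _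

end ConeBasics
section ConeOf

variable {V : Type*} [AddCommGroup V] [Module ℚ V]

lemma coneOf_mono {S T : Set V} (h : S ⊆ T) : coneOf S ⊆ coneOf T := by
  rintro x ⟨k, g, hg, hx⟩
  exact ⟨k, g, fun i => h (hg i), hx⟩

lemma coneOf_zero_mem (S : Set V) : (0 : V) ∈ coneOf S :=
  ⟨0, Fin.elim0, fun i => i.elim0, coneGen_zero_mem _⟩

lemma coneOf_add {S : Set V} {x y : V} (hx : x ∈ coneOf S) (hy : y ∈ coneOf S) :
    x + y ∈ coneOf S := by
  obtain ⟨k₁, g₁, hg₁, c₁, hc₁, rfl⟩ := hx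
  obtain ⟨k₂, g₂, hg₂, c₂, hc₂, rfl⟩ := hy
  refine ⟨k₁ + k₂, Fin.append g₁ g₂, fun i => ?_,
    Fin.append c₁ c₂, fun i => ?_, ?_⟩
  · refine Fin.addCases (fun j => ?_) (fun j => ?_) i
    · rw [Fin.append_left]; exact hg₁ j
    · rw [Fin.append_right]; exact hg₂ j
  · refine Fin.addCases (fun j => ?_) (fun j => ?_) i
    · rw [Fin.append_left]; exact hc₁ j
    · rw [Fin.append_right]; exact hc₂ j
  · rw [Fin.sum_univ_add]
    simp [Fin.append_left, Fin.append_right]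

lemma smul_mem_coneOf {S : Set V} {s : V} (hs : s ∈ S) {q : ℚ} (hq : 0 ≤ q) :
    q • s ∈ coneOf S := by
  refine ⟨1, ![s], fun i => by fin_cases i <;> simpa, ![q], fun i => by fin_cases i <;> simpa, ?_⟩
  simp

/-- L4 : a nonnegative combination whose support lies in `S` belongs to `coneOf S`. -/
lemma sum_smul_mem_coneOf {S : Set V} : ∀ {k : ℕ} (g : Fin k → V) (c : Fin k → ℚ),
    (∀ i, 0 ≤ c i) → (∀ i, c i ≠ 0 → g i ∈ S) → (∑ i, c i • g i) ∈ coneOf S := by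
  intro k
  induction k with
  | zero => intro g c _ _; simpa using coneOf_zero_mem S
  | succ n ih =>
    intro g c hc hS
    rw [Fin.sum_univ_succ]
    refine coneOf_add ?_ (ih _ _ (fun i => hc _) (fun i hi => hS _ hi))
    by_cases h0 : c 0 = 0
    · simp only [h0, zero_smul]; exact coneOf_zero_mem S
    · exact smul_mem_coneOf (hS 0 h0) (hc 0)

lemma coneGen_subset_coneOf {S : Set V} {k : ℕ} {g : Fin k → V}
    (hg : ∀ i, g i ∈ S) : coneGen g ⊆ coneOf S :=
  fun _ hx => ⟨k, g, hg, hx⟩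

lemma coneOf_subset_coneGen {S : Set V} {k : ℕ} {g : Fin k → V}
    (hS : S ⊆ Set.range g) : coneOf S ⊆ coneGen g := by
  classical
  rintro x ⟨k', h, hh, c, hc, rfl⟩
  choose φ hφ using fun i => hS (hh i)
  refine ⟨fun j => ∑ i ∈ Finset.univ.filter (fun i => φ i = j), c i,
    fun j => Finset.sum_nonneg fun i _ => hc i, ?_⟩
  rw [← Finset.sum_fiberwise Finset.univ φ (fun i => c i • h i)]
  refine Finset.sum_congr rfl fun j _ => ?_
  rw [Finset.sum_smul]
  refine Finset.sum_congr rfl fun i hi => ?_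
  rw [Finset.mem_filter] at hi
  rw [← hi.2, hφ i]

lemma coneOf_eq_coneGen {S : Set V} {k : ℕ} {g : Fin k → V}
    (h1 : ∀ i, g i ∈ S) (h2 : S ⊆ Set.range g) : coneOf S = coneGen g :=
  le_antisymm (coneOf_subset_coneGen h2) (coneGen_subset_coneOf h1)

lemma nonneg_on_coneOf {S : Set V} (ℓ : V →ₗ[ℚ] ℚ) (h : ∀ x ∈ S, 0 ≤ ℓ x) :
    ∀ v ∈ coneOf S, 0 ≤ ℓ v := by
  rintro v ⟨k, g, hg, hv⟩
  exact nonneg_on_coneGen ℓ (fun i => h _ (hg i)) v hv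

lemma eq_zero_on_coneOf {S : Set V} (ℓ : V →ₗ[ℚ] ℚ) (h : ∀ x ∈ S, ℓ x = 0) :
    ∀ v ∈ coneOf S, ℓ v = 0 := by
  rintro v ⟨k, g, hg, c, hc, rfl⟩
  rw [map_sum]
  exact Finset.sum_eq_zero fun i _ => by rw [map_smul, h _ (hg i), smul_zero]

/-- Faces of `coneOf S` supported representation. -/
lemma exists_rep_of_apply_eq_zero_coneOf {S : Set V} (ℓ : V →ₗ[ℚ] ℚ)
    (h : ∀ x ∈ S, 0 ≤ ℓ x) {v : V} (hv : v ∈ coneOf S) (h0 : ℓ v = 0) :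
    ∃ (k : ℕ) (g : Fin k → V) (c : Fin k → ℚ), (∀ i, g i ∈ S) ∧ (∀ i, 0 ≤ c i) ∧
      (∀ i, c i ≠ 0 → ℓ (g i) = 0) ∧ v = ∑ i, c i • g i := by
  obtain ⟨k, g, hg, hv⟩ := hv
  obtain ⟨c, hc, hsupp, rfl⟩ := exists_rep_of_apply_eq_zero ℓ (fun i => h _ (hg i)) hv h0
  exact ⟨k, g, c, hg, hc, hsupp, rfl⟩

end ConeOf

section Trans

variable {V : Type*} [AddCommGroup V] [Module ℚ V]

/-- Transitivity of faces, for a finitely generated ambient cone. -/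
lemma isFaceOf_trans {X τ τ' : Set V} {k : ℕ} {g : Fin k → V} (hX : X = coneGen g)
    (h1 : IsFaceOf τ X) (h2 : IsFaceOf τ' τ) : IsFaceOf τ' X := by
  classical
  subst hX
  obtain ⟨ℓ, hℓ, hτ⟩ := h1
  obtain ⟨ℓ', hℓ', hτ'⟩ := h2
  have hℓg : ∀ i, 0 ≤ ℓ (g i) := fun i => hℓ _ (coneGen_self_mem g i)
  -- generators with `ℓ (g i) = 0` lie in `τ`
  have hker : ∀ i, ℓ (g i) = 0 → g i ∈ τ := fun i hi =>
    hτ ▸ ⟨coneGen_self_mem g i, hi⟩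
  -- choose N large
  set B : Fin k → ℚ := fun i => if 0 < ℓ (g i) then -ℓ' (g i) / ℓ (g i) else 0 with hB
  set N : ℚ := 1 + ∑ j, max (B j) 0 with hN
  have hBN : ∀ i, 0 < ℓ (g i) → -ℓ' (g i) < N * ℓ (g i) := by
    intro i hi
    have h1 : B i ≤ ∑ j, max (B j) 0 :=
      le_trans (le_max_left (B i) 0)
        (Finset.single_le_sum (f := fun j => max (B j) 0)
          (fun j _ => le_max_right _ _) (Finset.mem_univ i))
    have h2 : B i < N := by rw [hN]; linarith
    have h3 : B i * ℓ (g i) < N * ℓ (g i) := mul_lt_mul_of_pos_right h2 hi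
    rw [hB] at h3
    simp only [if_pos hi] at h3
    rwa [div_mul_cancel₀ _ (ne_of_gt hi)] at h3
  set L : V →ₗ[ℚ] ℚ := N • ℓ + ℓ' with hL
  have hLapp : ∀ v, L v = N * ℓ v + ℓ' v := fun v => by
    simp [hL, smul_eq_mul]
  have hLgen : ∀ i, 0 ≤ L (g i) := by
    intro i
    rcases eq_or_lt_of_le (hℓg i) with h | h
    · have hmem := hker i h.symm
      have : 0 ≤ ℓ' (g i) := hℓ' _ hmem
      rw [hLapp, ← h]; linarith
    · have := hBN i h
      rw [hLapp]; linarith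
  -- strict positivity on generators with ℓ (g i) > 0
  have hLpos : ∀ i, 0 < ℓ (g i) → 0 < L (g i) := by
    intro i h
    have := hBN i h
    rw [hLapp]; linarith
  refine ⟨L, nonneg_on_coneGen L hLgen, ?_⟩
  ext v
  constructor
  · intro hv
    have hvτ : v ∈ τ := (hτ' ▸ hv : v ∈ {v ∈ τ | ℓ' v = 0}).1
    have hℓ'v : ℓ' v = 0 := (hτ' ▸ hv : v ∈ {v ∈ τ | ℓ' v = 0}).2
    have hvX : v ∈ coneGen g := (hτ ▸ hvτ : v ∈ {v ∈ coneGen g | ℓ v = 0}).1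
    have hℓv : ℓ v = 0 := (hτ ▸ hvτ : v ∈ {v ∈ coneGen g | ℓ v = 0}).2
    exact ⟨hvX, by rw [hLapp, hℓv, hℓ'v]; ring⟩
  · rintro ⟨hvX, hLv⟩
    obtain ⟨c, hc, hsupp, rfl⟩ := exists_rep_of_apply_eq_zero L hLgen hvX hLv
    have hker2 : ∀ i, c i ≠ 0 → ℓ (g i) = 0 ∧ ℓ' (g i) = 0 := by
      intro i hi
      have hLi := hsupp i hi
      rcases eq_or_lt_of_le (hℓg i) with h | h
      · refine ⟨h.symm, ?_⟩
        rw [hLapp, ← h] at hLi; linarith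
      · exact absurd hLi (ne_of_gt (hLpos i h))
    have hℓv : ℓ (∑ i, c i • g i) = 0 := by
      rw [map_sum]
      refine Finset.sum_eq_zero fun i _ => ?_
      rw [map_smul, smul_eq_mul]
      by_cases hi : c i = 0
      · rw [hi, zero_mul]
      · rw [(hker2 i hi).1, mul_zero]
    have hℓ'v : ℓ' (∑ i, c i • g i) = 0 := by
      rw [map_sum]
      refine Finset.sum_eq_zero fun i _ => ?_
      rw [map_smul, smul_eq_mul]
      by_cases hi : c i = 0
      · rw [hi, zero_mul]
      · rw [(hker2 i hi).2, mul_zero]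
    have hvτ : (∑ i, c i • g i) ∈ τ := hτ ▸ ⟨⟨c, hc, rfl⟩, hℓv⟩
    exact hτ' ▸ ⟨hvτ, hℓ'v⟩

/-- Any face of a finitely generated cone is finitely generated. -/
lemma face_finGen {X τ : Set V} {k : ℕ} {g : Fin k → V} (hX : X = coneGen g)
    (h : IsFaceOf τ X) : ∃ (k' : ℕ) (g' : Fin k' → V), τ = coneGen g' := by
  classical
  obtain ⟨ℓ, hℓ, hτ⟩ := h
  subst hX
  exact ⟨k, _, hτ.trans (face_eq_coneGen_ite ℓ (fun i => hℓ _ (coneGen_self_mem g i)))⟩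

end Trans
section InterFaces

variable {V : Type*} [AddCommGroup V] [Module ℚ V]

/-- If `A` is a face of `X`, `B` a face of `Y`, and `X ∩ Y` a face of `X`, then
`A ∩ B` is a face of `A` (for `A` finitely generated). -/
lemma isFaceOf_inter_of_faces {X Y A B : Set V} {k : ℕ} {gA : Fin k → V}
    (hA : A = coneGen gA) (hAX : IsFaceOf A X) (hBY : IsFaceOf B Y)
    (hZX : IsFaceOf (X ∩ Y) X) : IsFaceOf (A ∩ B) A := by
  obtain ⟨ℓX, hℓX, hZ⟩ := hZX
  obtain ⟨ℓB, hℓB, hBeq⟩ := hBY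
  have hBsub : B ⊆ Y := hBeq ▸ Set.sep_subset _ _
  have step1 : IsFaceOf (A ∩ (X ∩ Y)) A := by
    refine ⟨ℓX, fun v hv => hℓX v (hAX.subset hv), ?_⟩
    ext v
    constructor
    · rintro ⟨hvA, hvZ⟩
      exact ⟨hvA, ((hZ ▸ hvZ : v ∈ {v ∈ X | ℓX v = 0})).2⟩
    · rintro ⟨hvA, hv0⟩
      exact ⟨hvA, hZ ▸ ⟨hAX.subset hvA, hv0⟩⟩
  have step2 : IsFaceOf (A ∩ B) (A ∩ (X ∩ Y)) := by
    refine ⟨ℓB, fun v hv => hℓB v hv.2.2, ?_⟩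
    ext v
    constructor
    · rintro ⟨hvA, hvB⟩
      exact ⟨⟨hvA, hAX.subset hvA, hBsub hvB⟩,
        ((hBeq ▸ hvB : v ∈ {v ∈ Y | ℓB v = 0})).2⟩
    · rintro ⟨⟨hvA, -, hvY⟩, hv0⟩
      exact ⟨hvA, hBeq ▸ ⟨hvY, hv0⟩⟩
  exact isFaceOf_trans hA step1 step2

/-- Membership in a singleton-generated cone. -/
lemma mem_coneGen_singleton {v x : V} : x ∈ coneGen ![v] ↔ ∃ c : ℚ, 0 ≤ c ∧ x = c • v := by
  constructor
  · rintro ⟨c, hc, rfl⟩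
    exact ⟨c 0, hc 0, by simp [Fin.sum_univ_one]⟩
  · rintro ⟨c, hc, rfl⟩
    exact ⟨fun _ => c, fun _ => hc, by simp [Fin.sum_univ_one]⟩

lemma coneGen_singleton_smul {v : V} {q : ℚ} (hq : 0 < q) :
    coneGen ![q • v] = coneGen ![v] := by
  ext x
  rw [mem_coneGen_singleton, mem_coneGen_singleton]
  constructor
  · rintro ⟨c, hc, rfl⟩
    exact ⟨c * q, mul_nonneg hc hq.le, by rw [smul_smul]⟩
  · rintro ⟨c, hc, rfl⟩
    refine ⟨c / q, div_nonneg hc hq.le, ?_⟩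
    rw [smul_smul, div_mul_cancel₀ _ (ne_of_gt hq)]

end InterFaces

section Rays

variable {ι : Type*} [Fintype ι]

lemma castQ_eq_zero {n : ι → ℤ} : castQ n = 0 ↔ n = 0 := by
  simp [castQ, funext_iff]

/-- A primitive generator of a ray is nonzero and generates the ray. -/
lemma ray_repr {F : TFan ι} {ρ : Set (ι → ℚ)} {u : ι → ℤ} (hρ : F.IsRayOf ρ)
    (hu : IsPrimGen ρ u) : u ≠ 0 ∧ ρ = coneGen ![castQ u] := by
  obtain ⟨hmem, v, hv0, rfl⟩ := hρ
  set d : ℕ := ∏ i, (v i).den with hd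
  have hd0 : (d : ℚ) ≠ 0 := by
    rw [hd]
    push_cast
    exact Finset.prod_ne_zero_iff.2 fun i _ => Nat.cast_ne_zero.2 (v i).den_nz
  set n : ι → ℤ := fun i => (v i).num * ((d / (v i).den : ℕ) : ℤ) with hn
  have hcast : castQ n = (d : ℚ) • v := by
    funext i
    have hdvd : (v i).den ∣ d := Finset.dvd_prod_of_mem _ (Finset.mem_univ i)
    have key : ((d / (v i).den : ℕ) : ℚ) = (d : ℚ) / ((v i).den : ℚ) :=
      Nat.cast_div hdvd (by exact_mod_cast (v i).den_nz)
    show ((((v i).num * ((d / (v i).den : ℕ) : ℤ)) : ℤ) : ℚ) = (d : ℚ) * v i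
    rw [Int.cast_mul, Int.cast_natCast, key]
    conv_rhs => rw [← Rat.num_div_den (v i)]
    ring
  have hn0 : n ≠ 0 := by
    intro h
    have h2 : (d : ℚ) • v = 0 := by rw [← hcast, h, castQ_eq_zero.2 rfl]
    rcases smul_eq_zero.mp h2 with h3 | h3
    · exact hd0 h3
    · exact hv0 h3
  have hnρ : castQ n ∈ coneGen ![v] :=
    mem_coneGen_singleton.2 ⟨d, Nat.cast_nonneg d, hcast⟩
  obtain ⟨k, hk⟩ := hu.2 n hnρ
  have hu0 : u ≠ 0 := by
    intro h
    exact hn0 (by rw [hk, h, smul_zero])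
  obtain ⟨q, hq, hqv⟩ := mem_coneGen_singleton.1 hu.1
  have hq0 : q ≠ 0 := by
    intro h
    exact hu0 (castQ_eq_zero.1 (by rw [hqv, h, zero_smul]))
  refine ⟨hu0, ?_⟩
  rw [hqv, coneGen_singleton_smul (lt_of_le_of_ne hq (Ne.symm hq0))]

/-- Primitive generators are unique. -/
lemma primGen_unique {F : TFan ι} {ρ : Set (ι → ℚ)} {u u' : ι → ℤ}
    (hρ : F.IsRayOf ρ) (hu : IsPrimGen ρ u) (hu' : IsPrimGen ρ u') : u = u' := by
  obtain ⟨hu0, -⟩ := ray_repr hρ hu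
  obtain ⟨k, hk⟩ := hu.2 u' hu'.1
  obtain ⟨k', hk'⟩ := hu'.2 u hu.1
  have hkk : u = (k' * k) • u := by
    rw [mul_smul, ← hk]; exact hk'
  obtain ⟨i, hi⟩ := Function.ne_iff.1 hu0
  have heq : u i = ((k' * k : ℕ) : ℤ) * u i := by
    conv_lhs => rw [hkk]
    simp [nsmul_eq_mul]
  have h1 : ((k' * k : ℕ) : ℤ) = 1 := by
    have := mul_right_cancel₀ hi (by linarith [heq] : ((k' * k : ℕ) : ℤ) * u i = 1 * u i)
    exact this
  have h1' : k' * k = 1 := by exact_mod_cast h1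
  have h2 : k = 1 := Nat.eq_one_of_mul_eq_one_left h1'
  rw [hk, h2, one_smul]

end Rays
section FanLemmas

variable {ι : Type*} [Fintype ι] {F : TFan ι} {a : Set (ι → ℚ) → ℤ} {σ : Set (ι → ℚ)}

lemma cone_sum_mem (hσ : σ ∈ F.cones) {α : Type*} (s : Finset α) (f : α → (ι → ℚ))
    (hf : ∀ i ∈ s, f i ∈ σ) : ∑ i ∈ s, f i ∈ σ := by
  obtain ⟨k, g, rfl⟩ := F.rat σ hσ
  exact coneGen_sum_mem s f hf

lemma cone_smul_mem (hσ : σ ∈ F.cones) {q : ℚ} (hq : 0 ≤ q) {x : ι → ℚ}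
    (hx : x ∈ σ) : q • x ∈ σ := by
  obtain ⟨k, g, rfl⟩ := F.rat σ hσ
  exact coneGen_smul hq hx

lemma ray_subset_of_mem {ρ : Set (ι → ℚ)} {u : ι → ℤ} (hσ : σ ∈ F.cones)
    (hρ : F.IsRayOf ρ) (hu : IsPrimGen ρ u) (hmem : castQ u ∈ σ) : ρ ⊆ σ := by
  rw [(ray_repr hρ hu).2]
  rintro x hx
  obtain ⟨c, hc, rfl⟩ := mem_coneGen_singleton.1 hx
  exact cone_smul_mem hσ hc hmem

lemma raySet_fst_mem (hσ : σ ∈ F.cones) {x : (ι → ℚ) × ℚ} (hx : x ∈ raySet F a σ) :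
    x.1 ∈ σ ∧ x.1 ≠ 0 := by
  obtain ⟨ρ, u, hρ, hsub, hu, rfl⟩ := hx
  refine ⟨hsub hu.1, ?_⟩
  simpa [castQ_eq_zero] using (ray_repr hρ hu).1

lemma raySet_finite (hσ : σ ∈ F.cones) : (raySet F a σ).Finite := by
  classical
  obtain ⟨k, g, hσeq⟩ := F.rat σ hσ
  set gQ : Fin k → ι → ℚ := fun i => castQ (g i) with hgQ
  apply Set.Finite.of_finite_image (f := fun x : (ι → ℚ) × ℚ => coneGen ![x.1])
  · apply Set.Finite.subset (Set.finite_range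
      (fun s : Finset (Fin k) => coneGen (fun i => if i ∈ s then gQ i else 0)))
    rintro _ ⟨x, hx, rfl⟩
    obtain ⟨ρ, u, hρ, hsub, hu, rfl⟩ := hx
    have hray := ray_repr hρ hu
    have hface : IsFaceOf ρ σ := by
      have := F.inter_face σ hσ ρ hρ.1
      rwa [Set.inter_eq_self_of_subset_right hsub] at this
    obtain ⟨ℓ, hℓ, hρeq⟩ := hface
    refine ⟨Finset.univ.filter (fun i => ℓ (gQ i) = 0), ?_⟩
    have h1 : ρ = coneGen (fun i => if ℓ (gQ i) = 0 then gQ i else 0) := by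
      rw [hρeq, hσeq]
      exact face_eq_coneGen_ite ℓ (fun i => hℓ _ (hσeq ▸ coneGen_self_mem gQ i))
    have h2 : (fun i => if i ∈ Finset.univ.filter (fun i => ℓ (gQ i) = 0) then gQ i else 0)
        = (fun i => if ℓ (gQ i) = 0 then gQ i else 0) := by
      funext i; simp [Finset.mem_filter]
    show coneGen (fun i => if i ∈ Finset.univ.filter (fun i => ℓ (gQ i) = 0)
      then gQ i else 0) = coneGen ![(castQ u, (a ρ : ℚ)).1]
    rw [h2, ← h1]
    exact hray.2
  · rintro x hx y hy hxy
    obtain ⟨ρ, u, hρ, hsub, hu, rfl⟩ := hx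
    obtain ⟨ρ', u', hρ', hsub', hu', rfl⟩ := hy
    simp only at hxy
    have h1 := (ray_repr hρ hu).2
    have h2 := (ray_repr hρ' hu').2
    have hρρ' : ρ = ρ' := by rw [h1, h2]; exact hxy
    subst hρρ'
    have huu' : u = u' := primGen_unique hρ hu hu'
    rw [huu']

/-- Enumeration of a finite set of integral vectors as an integer family. -/
lemma coneOf_integral_repr {S : Set ((ι → ℚ) × ℚ)} (hfin : S.Finite)
    (hint : ∀ x ∈ S, ∃ p : (ι → ℤ) × ℤ, x = (castQ p.1, (p.2 : ℚ))) :
    ∃ (k : ℕ) (G : Fin k → (ι → ℤ) × ℤ),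
      (∀ i, ((castQ (G i).1, ((G i).2 : ℚ)) : (ι → ℚ) × ℚ) ∈ S) ∧
      S ⊆ Set.range (fun i => ((castQ (G i).1, ((G i).2 : ℚ)) : (ι → ℚ) × ℚ)) ∧
      coneOf S = coneGen (fun i => ((castQ (G i).1, ((G i).2 : ℚ)) : (ι → ℚ) × ℚ)) := by
  classical
  set t := hfin.toFinset with ht
  set e : Fin t.card → ((ι → ℚ) × ℚ) := fun i => (t.equivFin.symm i : (ι → ℚ) × ℚ) with he
  have hemem : ∀ i, e i ∈ S := fun i => hfin.mem_toFinset.1 (t.equivFin.symm i).2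
  have hesurj : S ⊆ Set.range e := by
    intro x hx
    exact ⟨t.equivFin ⟨x, hfin.mem_toFinset.2 hx⟩, by simp [he]⟩
  choose P hP using fun i => hint (e i) (hemem i)
  refine ⟨t.card, P, ?_, ?_, ?_⟩
  · intro i; rw [← hP i]; exact hemem i
  · intro x hx
    obtain ⟨i, hi⟩ := hesurj hx
    exact ⟨i, by show (castQ (P i).1, ((P i).2 : ℚ)) = x; rw [← hP i]; exact hi⟩
  · refine coneOf_eq_coneGen (fun i => ?_) (fun x hx => ?_)
    · rw [← hP i]; exact hemem i
    · obtain ⟨i, hi⟩ := hesurj hx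
      exact ⟨i, by show (castQ (P i).1, ((P i).2 : ℚ)) = x; rw [← hP i]; exact hi⟩

lemma overCone_repr (hσ : σ ∈ F.cones) :
    ∃ (k : ℕ) (G : Fin k → (ι → ℤ) × ℤ),
      (∀ i, ((castQ (G i).1, ((G i).2 : ℚ)) : (ι → ℚ) × ℚ) ∈
        raySet F a σ ∪ {((0 : ι → ℚ), (1 : ℚ))}) ∧
      (raySet F a σ ∪ {((0 : ι → ℚ), (1 : ℚ))} ⊆
        Set.range (fun i => ((castQ (G i).1, ((G i).2 : ℚ)) : (ι → ℚ) × ℚ))) ∧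
      overCone F a σ = coneGen (fun i => ((castQ (G i).1, ((G i).2 : ℚ)) : (ι → ℚ) × ℚ)) := by
  apply coneOf_integral_repr ((raySet_finite hσ).union (Set.finite_singleton _))
  rintro x (hx | hx)
  · obtain ⟨ρ, u, hρ, hsub, hu, rfl⟩ := hx
    exact ⟨(u, a ρ), rfl⟩
  · refine ⟨(0, 1), ?_⟩
    rw [hx]
    simp [castQ]
    rfl

lemma liftCone_repr (hσ : σ ∈ F.cones) :
    ∃ (k : ℕ) (G : Fin k → (ι → ℤ) × ℤ),
      (∀ i, ((castQ (G i).1, ((G i).2 : ℚ)) : (ι → ℚ) × ℚ) ∈ raySet F a σ) ∧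
      (raySet F a σ ⊆ Set.range (fun i => ((castQ (G i).1, ((G i).2 : ℚ)) : (ι → ℚ) × ℚ))) ∧
      liftCone F a σ = coneGen (fun i => ((castQ (G i).1, ((G i).2 : ℚ)) : (ι → ℚ) × ℚ)) := by
  apply coneOf_integral_repr (raySet_finite hσ)
  rintro x hx
  obtain ⟨ρ, u, hρ, hsub, hu, rfl⟩ := hx
  exact ⟨(u, a ρ), rfl⟩

end FanLemmas
section MainLemmas

variable {ι : Type*} [Fintype ι] {F : TFan ι} {a : Set (ι → ℚ) → ℤ} {σ σ' : Set (ι → ℚ)}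

/-- The linear functional `v ↦ ∑ m i * v i`. -/
def dotL (m : ι → ℚ) : (ι → ℚ) →ₗ[ℚ] ℚ where
  toFun v := ∑ i, m i * v i
  map_add' u v := by simp [mul_add, Finset.sum_add_distrib]
  map_smul' c v := by
    simp only [Pi.smul_apply, smul_eq_mul, RingHom.id_apply, Finset.mul_sum]
    exact Finset.sum_congr rfl fun i _ => by ring

/-- The functional `(v, t) ↦ t - ∑ m i * v i`. -/
def cartL (m : ι → ℚ) : ((ι → ℚ) × ℚ) →ₗ[ℚ] ℚ :=
  LinearMap.snd ℚ (ι → ℚ) ℚ - (dotL m).comp (LinearMap.fst ℚ (ι → ℚ) ℚ)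

lemma cartL_apply (m : ι → ℚ) (x : (ι → ℚ) × ℚ) :
    cartL m x = x.2 - ∑ i, m i * x.1 i := rfl

lemma cone_zero_mem (hσ : σ ∈ F.cones) : (0 : ι → ℚ) ∈ σ := by
  obtain ⟨k, g, rfl⟩ := F.rat σ hσ
  exact coneGen_zero_mem _

lemma union_fst_mem (hσ : σ ∈ F.cones) {y : (ι → ℚ) × ℚ}
    (hy : y ∈ raySet F a σ ∪ {((0 : ι → ℚ), (1 : ℚ))}) : y.1 ∈ σ := by
  rcases hy with hy | hy
  · exact (raySet_fst_mem hσ hy).1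
  · rw [Set.mem_singleton_iff] at hy
    rw [hy]
    exact cone_zero_mem hσ

/-- Part (a): the lifted cone is a face of the over cone. -/
lemma lift_isFaceOf_over (hσ : σ ∈ F.cones) (m : ι → ℤ)
    (hm : ∀ ρ, F.IsRayOf ρ → ρ ⊆ σ → ∀ u, IsPrimGen ρ u → ∑ i, m i * u i = a ρ) :
    IsFaceOf (liftCone F a σ) (overCone F a σ) := by
  set ℓ := cartL (castQ m) with hℓdef
  have hS0 : ∀ x ∈ raySet F a σ, ℓ x = 0 := by
    rintro x ⟨ρ, u, hρ, hsub, hu, rfl⟩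
    rw [hℓdef, cartL_apply]
    have h := hm ρ hρ hsub u hu
    have h2 : ((∑ i, m i * u i : ℤ) : ℚ) = ∑ i, castQ m i * castQ u i := by
      push_cast [castQ]; rfl
    simp only
    rw [← h2, h, sub_self]
  have hone : ℓ ((0 : ι → ℚ), (1 : ℚ)) = 1 := by
    rw [hℓdef, cartL_apply]
    simp
  have hS : ∀ x ∈ raySet F a σ ∪ {((0 : ι → ℚ), (1 : ℚ))}, 0 ≤ ℓ x := by
    rintro x (hx | hx)
    · rw [hS0 x hx]
    · rw [Set.mem_singleton_iff] at hx
      rw [hx, hone]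
      norm_num
  refine ⟨ℓ, nonneg_on_coneOf ℓ hS, ?_⟩
  ext x
  constructor
  · intro hx
    exact ⟨coneOf_mono Set.subset_union_left hx, eq_zero_on_coneOf ℓ hS0 x hx⟩
  · rintro ⟨hx, h0⟩
    obtain ⟨k, g, c, hgS, hc, hsupp, rfl⟩ :=
      exists_rep_of_apply_eq_zero_coneOf ℓ hS hx h0
    apply sum_smul_mem_coneOf g c hc
    intro i hi
    rcases hgS i with hgi | hgi
    · exact hgi
    · rw [Set.mem_singleton_iff] at hgi
      exact absurd (by rw [hgi, hone] : ℓ (g i) = 1) (by rw [hsupp i hi]; norm_num)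

lemma overCone_fst_mem (hσ : σ ∈ F.cones) {x : (ι → ℚ) × ℚ}
    (hx : x ∈ overCone F a σ) : x.1 ∈ σ := by
  obtain ⟨k, g, hgS, c, hc, rfl⟩ := hx
  have h : (∑ i, c i • g i).1 = ∑ i, c i • (g i).1 := by
    rw [Prod.fst_sum]
    exact Finset.sum_congr rfl fun i _ => rfl
  rw [h]
  exact cone_sum_mem hσ _ _ fun i _ => cone_smul_mem hσ (hc i) (union_fst_mem hσ (hgS i))

lemma overCone_snd_nonneg (hσ : σ ∈ F.cones) {x : (ι → ℚ) × ℚ}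
    (hx : x ∈ overCone F a σ) (h1 : x.1 = 0) : 0 ≤ x.2 := by
  classical
  obtain ⟨k, g, hgS, c, hc, rfl⟩ := hx
  have hfst : ∑ i, c i • (g i).1 = 0 := by
    rw [← h1, Prod.fst_sum]
    exact Finset.sum_congr rfl fun i _ => rfl
  have hterm : ∀ i, c i • (g i).1 = 0 := by
    intro i
    have hmem : ∀ j, c j • (g j).1 ∈ σ :=
      fun j => cone_smul_mem hσ (hc j) (union_fst_mem hσ (hgS j))
    have hneg : -(c i • (g i).1) = ∑ j ∈ Finset.univ.erase i, c j • (g j).1 := by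
      have := Finset.add_sum_erase Finset.univ (fun j => c j • (g j).1) (Finset.mem_univ i)
      rw [hfst] at this
      exact neg_eq_of_add_eq_zero_right this
    have hnegmem : -(c i • (g i).1) ∈ σ := by
      rw [hneg]
      exact cone_sum_mem hσ _ _ fun j _ => hmem j
    exact F.strconv σ hσ ⟨hmem i, by rwa [Set.mem_neg]⟩
  have hsnd : (∑ i, c i • g i).2 = ∑ i, c i • (g i).2 := by
    rw [Prod.snd_sum]
    exact Finset.sum_congr rfl fun i _ => rfl
  rw [hsnd]
  refine Finset.sum_nonneg fun i _ => ?_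
  by_cases hci : c i = 0
  · rw [hci, zero_smul]
  · have hfst0 : (g i).1 = 0 := by
      rcases smul_eq_zero.mp (hterm i) with h | h
      · exact absurd h hci
      · exact h
    rcases hgS i with hgi | hgi
    · exact absurd hfst0 (raySet_fst_mem hσ hgi).2
    · rw [Set.mem_singleton_iff] at hgi
      rw [hgi]
      simpa using hc i

lemma overCone_strconv (hσ : σ ∈ F.cones) :
    overCone F a σ ∩ (-(overCone F a σ)) ⊆ {0} := by
  rintro x ⟨hx, hnx⟩
  rw [Set.mem_neg] at hnx
  have h1 : x.1 ∈ σ := overCone_fst_mem hσ hx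
  have h2 : -x.1 ∈ σ := by simpa using overCone_fst_mem hσ hnx
  have hx1 : x.1 = 0 := F.strconv σ hσ ⟨h1, by rwa [Set.mem_neg]⟩
  have hx2 : 0 ≤ x.2 := overCone_snd_nonneg hσ hx hx1
  have hx2' : 0 ≤ (-x).2 := overCone_snd_nonneg hσ hnx (by simp [hx1])
  have : x.2 = 0 := le_antisymm (by simpa using hx2') hx2
  show x = 0
  exact Prod.ext hx1 this

/-- The intersection of two over cones is a face of the first. -/
lemma overCone_inter (hσ : σ ∈ F.cones) (hσ' : σ' ∈ F.cones) :
    IsFaceOf (overCone F a σ ∩ overCone F a σ') (overCone F a σ) := by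
  obtain ⟨ℓ₀, hℓ₀, hZ⟩ := F.inter_face σ hσ σ' hσ'
  set L : ((ι → ℚ) × ℚ) →ₗ[ℚ] ℚ := ℓ₀.comp (LinearMap.fst ℚ (ι → ℚ) ℚ) with hLdef
  have hLapp : ∀ x : (ι → ℚ) × ℚ, L x = ℓ₀ x.1 := fun x => rfl
  have hS : ∀ x ∈ raySet F a σ ∪ {((0 : ι → ℚ), (1 : ℚ))}, 0 ≤ L x :=
    fun x hx => hℓ₀ _ (union_fst_mem hσ hx)
  refine ⟨L, nonneg_on_coneOf L hS, ?_⟩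
  ext x
  constructor
  · rintro ⟨hx, hx'⟩
    refine ⟨hx, ?_⟩
    have hmem : x.1 ∈ σ ∩ σ' := ⟨overCone_fst_mem hσ hx, overCone_fst_mem hσ' hx'⟩
    rw [hZ] at hmem
    exact hmem.2
  · rintro ⟨hx, h0⟩
    refine ⟨hx, ?_⟩
    obtain ⟨k, g, c, hgS, hc, hsupp, rfl⟩ :=
      exists_rep_of_apply_eq_zero_coneOf L hS hx h0
    apply sum_smul_mem_coneOf g c hc
    intro i hi
    rcases hgS i with hgi | hgi
    · obtain ⟨ρ, u, hρ, hsub, hu, hgeq⟩ := hgi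
      have hL : ℓ₀ (castQ u) = 0 := by
        have h := hsupp i hi
        rw [hgeq] at h
        exact h
      have hmem' : castQ u ∈ σ ∩ σ' := by
        rw [hZ]
        exact ⟨hsub hu.1, hL⟩
      exact Or.inl ⟨ρ, u, hρ, ray_subset_of_mem hσ' hρ hu hmem'.2, hu, hgeq⟩
    · exact Or.inr hgi

end MainLemmas
section Assemble

variable {ι : Type*} [Fintype ι] {F : TFan ι} {a : Set (ι → ℚ) → ℤ} {σ : Set (ι → ℚ)}

lemma isFaceOf_overCone_of_cases (hσ : σ ∈ F.cones) (m : ι → ℤ)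
    (hm : ∀ ρ, F.IsRayOf ρ → ρ ⊆ σ → ∀ u, IsPrimGen ρ u → ∑ i, m i * u i = a ρ)
    {τ : Set ((ι → ℚ) × ℚ)}
    (hτ : τ = liftCone F a σ ∨ τ = overCone F a σ ∨
      IsFaceOf τ (liftCone F a σ) ∨ IsFaceOf τ (overCone F a σ)) :
    IsFaceOf τ (overCone F a σ) := by
  obtain ⟨k, G, -, -, hover⟩ := overCone_repr (a := a) hσ
  have hlift := lift_isFaceOf_over hσ m hm
  rcases hτ with rfl | rfl | h | h
  · exact hlift
  · exact isFaceOf_self _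
  · exact isFaceOf_trans hover hlift h
  · exact h

end Assemble
/-- For a Cartier divisor `D = Σ a_ρ D_ρ` on the toric variety of a fan `Σ` (the Cartier
condition being that on each cone `σ` the assignment `u_ρ ↦ a_ρ` is given by a linear
functional), (a) each lifted cone `σ̂₀` is a face of the over cone `σ̂`, and (b) the
collection of all lifted cones, over cones, and their faces is a fan in `N ⊕ ℤ`: its
members are strongly convex rational polyhedral cones, it is closed under taking faces,
and the intersection of any two members is a face of each. -/
theorem stmt15 {ι : Type*} [Fintype ι] (F : TFan ι) (a : Set (ι → ℚ) → ℤ)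
    (hCartier : ∀ σ ∈ F.cones, ∃ m : ι → ℤ, ∀ ρ, F.IsRayOf ρ → ρ ⊆ σ →
      ∀ u, IsPrimGen ρ u → ∑ i, m i * u i = a ρ) :
    (∀ σ ∈ F.cones, IsFaceOf (liftCone F a σ) (overCone F a σ)) ∧
    ∀ C : Set (Set ((ι → ℚ) × ℚ)),
      C = {τ | ∃ σ ∈ F.cones, τ = liftCone F a σ ∨ τ = overCone F a σ ∨
          IsFaceOf τ (liftCone F a σ) ∨ IsFaceOf τ (overCone F a σ)} →
      (∀ τ ∈ C, IsRatConeP τ) ∧ (∀ τ ∈ C, τ ∩ (-τ) ⊆ {0}) ∧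
      (∀ τ ∈ C, ∀ τ', IsFaceOf τ' τ → τ' ∈ C) ∧
      (∀ τ ∈ C, ∀ τ' ∈ C, IsFaceOf (τ ∩ τ') τ) := by
  classical
  constructor
  · intro σ hσ
    obtain ⟨m, hm⟩ := hCartier σ hσ
    exact lift_isFaceOf_over hσ m hm
  · rintro C rfl
    refine ⟨?_, ?_, ?_, ?_⟩
    · -- rational polyhedral
      rintro τ ⟨σ, hσ, hτ⟩
      obtain ⟨m, hm⟩ := hCartier σ hσ
      have hface : IsFaceOf τ (overCone F a σ) := isFaceOf_overCone_of_cases hσ m hm hτ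
      obtain ⟨k, G, -, -, hover⟩ := overCone_repr (a := a) hσ
      obtain ⟨ℓ, hℓ, hτeq⟩ := hface
      rw [hover] at hℓ hτeq
      refine ⟨k, fun i =>
        if ℓ ((castQ (G i).1, ((G i).2 : ℚ)) : (ι → ℚ) × ℚ) = 0 then G i else 0, ?_⟩
      have h1 := face_eq_coneGen_ite ℓ (fun i => hℓ _
        (coneGen_self_mem (fun i => ((castQ (G i).1, ((G i).2 : ℚ)) : (ι → ℚ) × ℚ)) i))
      have hfun : (fun i : Fin k =>
            ((castQ ((if ℓ ((castQ (G i).1, ((G i).2 : ℚ)) : (ι → ℚ) × ℚ) = 0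
                then G i else 0) : (ι → ℤ) × ℤ).1,
              (((if ℓ ((castQ (G i).1, ((G i).2 : ℚ)) : (ι → ℚ) × ℚ) = 0
                then G i else 0) : (ι → ℤ) × ℤ).2 : ℚ)) : (ι → ℚ) × ℚ))
          = fun i : Fin k =>
            if ℓ ((castQ (G i).1, ((G i).2 : ℚ)) : (ι → ℚ) × ℚ) = 0
              then ((castQ (G i).1, ((G i).2 : ℚ)) : (ι → ℚ) × ℚ) else 0 := by
        funext i
        by_cases hi : ℓ ((castQ (G i).1, ((G i).2 : ℚ)) : (ι → ℚ) × ℚ) = 0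
        · simp only [if_pos hi]
        · simp only [if_neg hi]
          exact Prod.ext (castQ_eq_zero.2 rfl) (by norm_num)
      rw [hτeq, h1, hfun]
    · -- strongly convex
      rintro τ ⟨σ, hσ, hτ⟩
      obtain ⟨m, hm⟩ := hCartier σ hσ
      have hsub : τ ⊆ overCone F a σ := (isFaceOf_overCone_of_cases hσ m hm hτ).subset
      rintro x ⟨hx, hnx⟩
      rw [Set.mem_neg] at hnx
      exact overCone_strconv hσ ⟨hsub hx, by rw [Set.mem_neg]; exact hsub hnx⟩
    · -- closed under faces
      rintro τ ⟨σ, hσ, hτ⟩ τ' hface'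
      refine ⟨σ, hσ, ?_⟩
      obtain ⟨k, G, -, -, hover⟩ := overCone_repr (a := a) hσ
      obtain ⟨k2, G2, -, -, hlift⟩ := liftCone_repr (a := a) hσ
      rcases hτ with rfl | rfl | h | h
      · exact Or.inr (Or.inr (Or.inl hface'))
      · exact Or.inr (Or.inr (Or.inr hface'))
      · exact Or.inr (Or.inr (Or.inl (isFaceOf_trans hlift h hface')))
      · exact Or.inr (Or.inr (Or.inr (isFaceOf_trans hover h hface')))
    · -- pairwise intersections are faces
      rintro τ ⟨σ, hσ, hτ⟩ τ' ⟨σ', hσ', hτ'⟩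
      obtain ⟨m, hm⟩ := hCartier σ hσ
      obtain ⟨m', hm'⟩ := hCartier σ' hσ'
      have h1 : IsFaceOf τ (overCone F a σ) := isFaceOf_overCone_of_cases hσ m hm hτ
      have h2 : IsFaceOf τ' (overCone F a σ') := isFaceOf_overCone_of_cases hσ' m' hm' hτ'
      obtain ⟨k, G, -, -, hover⟩ := overCone_repr (a := a) hσ
      obtain ⟨kt, gt, hτgen⟩ := face_finGen hover h1
      exact isFaceOf_inter_of_faces hτgen h1 h2 (overCone_inter hσ hσ')
end

section
/- Let Σ_X be the fan in N̄ = N ⊕ ℤ (N the quotient of ℤ⁵ generated by u₀,…,u₄ with Σu_i = 0) whose cones are the ℚ_{≥0}-spans of subsets of {(0,1), (u₀,1), …, (u₄,1)} that omit at least one element of the form (u_i,1). Let Σ_{X'} be the image fan of Σ_X under the quotient map N̄ → N̄' dual to the inclusion of (ℤ/5)³-invariant characters. Then under the natural identification N̄' ≅ M̄ (the character group of X), the fans Σ_X ⊂ N̄ and Σ_{X'} ⊂ M̄ are dual fans: the pairing is nonnegative on |Σ_{X'}| × |Σ_X|. -/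
open scoped BigOperators

/-- The six ray generators of the fan `Σ_X` of `X = Spec Sym (O(5)) → P⁴`, written at the
level of representatives in `ℤ⁵_ℚ × ℚ` (the first five are `(u_i, 1)` with `u_i` the
class of `e_i` in `N = ℤ⁵/⟨𝟙⟩`, the last is `(0, 1)`). -/
def gens (i : Fin 6) : (Fin 5 → ℚ) × ℚ :=
  if (i : ℕ) < 5 then (fun j => if (j : ℕ) = (i : ℕ) then 1 else 0, 1) else (0, 1)

/-- The identification `N̄' ≅ M̄`, `(n, k) ↦ (Y₀⋯Y₄)^k ∏ᵢ (Yᵢ⁵/Y₀⋯Y₄)^{nᵢ}`, sending a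
point of `N̄_ℚ = N_ℚ ⊕ ℚ` (given by a representative) to the exponent vector of the
corresponding monomial; it descends to the quotient by `𝟙`. -/
def psiGP (p : (Fin 5 → ℚ) × ℚ) : Fin 5 → ℚ :=
  fun j => p.2 + 5 * p.1 j - ∑ i, p.1 i

/-- The canonical pairing between the character lattice `M̄` of `X` (monomials in
`Y₀, …, Y₄` whose degree is divisible by 5, extended to `ℚ` coefficients) and
`N̄_ℚ = N_ℚ ⊕ ℚ` (given by representatives). -/
def pairGP (m : Fin 5 → ℚ) (p : (Fin 5 → ℚ) × ℚ) : ℚ :=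
  (∑ i, (m i - (∑ t, m t) / 5) * p.1 i) + ((∑ t, m t) / 5) * p.2

lemma gens_fst_nonneg (i : Fin 6) (j : Fin 5) : 0 ≤ (gens i).1 j := by
  by_cases h : (i : ℕ) < 5
  · simp only [gens, if_pos h]; split_ifs <;> norm_num
  · simp [gens, h]

lemma gens_sum_le (i : Fin 6) : ∑ j, (gens i).1 j ≤ (gens i).2 := by
  fin_cases i <;> simp [gens, Fin.sum_univ_five] <;> decide

lemma combo_nonneg (S : Finset (Fin 6)) (c : Fin 6 → ℚ) (hc : ∀ i, 0 ≤ c i) (j : Fin 5) :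
    0 ≤ (∑ i ∈ S, c i • gens i).1 j := by
  rw [Prod.fst_sum, Finset.sum_apply]
  exact Finset.sum_nonneg fun i _ => mul_nonneg (hc i) (gens_fst_nonneg i j)

lemma combo_sum_le (S : Finset (Fin 6)) (c : Fin 6 → ℚ) (hc : ∀ i, 0 ≤ c i) :
    (∑ j, (∑ i ∈ S, c i • gens i).1 j) ≤ (∑ i ∈ S, c i • gens i).2 := by
  calc ∑ j, (∑ i ∈ S, c i • gens i).1 j
      = ∑ i ∈ S, ∑ j, c i * (gens i).1 j := by
        simp only [Prod.fst_sum, Finset.sum_apply, Pi.smul_apply, Prod.smul_fst,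
          smul_eq_mul]
        rw [Finset.sum_comm]
    _ ≤ ∑ i ∈ S, c i * (gens i).2 := Finset.sum_le_sum fun i _ => by
        rw [← Finset.mul_sum]
        exact mul_le_mul_of_nonneg_left (gens_sum_le i) (hc i)
    _ = (∑ i ∈ S, c i • gens i).2 := by
        rw [Prod.snd_sum]; simp [smul_eq_mul]

lemma key (a b : Fin 5 → ℚ) (r s : ℚ) (ha : ∀ i, 0 ≤ a i) (hb : ∀ i, 0 ≤ b i)
    (hra : ∑ i, a i ≤ r) (hsb : ∑ i, b i ≤ s) : 0 ≤ pairGP (psiGP (b, s)) (a, r) := by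
  have ha' : 0 ≤ ∑ i, a i := Finset.sum_nonneg fun i _ => ha i
  have hb' : 0 ≤ ∑ i, b i := Finset.sum_nonneg fun i _ => hb i
  have hkey : (∑ i, a i) * (∑ i, b i) ≤ r * s := mul_le_mul hra hsb hb' (ha'.trans hra)
  simp only [pairGP, psiGP, Fin.sum_univ_five] at *
  nlinarith [mul_nonneg (ha 0) (hb 0), mul_nonneg (ha 1) (hb 1), mul_nonneg (ha 2) (hb 2),
    mul_nonneg (ha 3) (hb 3), mul_nonneg (ha 4) (hb 4)]

/-- The quintic and its Greene–Plesser mirror give dual fans: `Σ_X` has cones the spans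
of subsets of `{(0,1), (u₀,1), …, (u₄,1)}` omitting some `(u_i,1)`, `Σ_{X'}` is its image
fan under `N̄ → N̄' ≅ M̄`, and the canonical pairing is nonnegative on
`|Σ_{X'}| × |Σ_X|`. -/
theorem stmt18 :
    ∀ S T : Finset (Fin 6),
      (∃ i : Fin 5, i.castSucc ∉ S) → (∃ i : Fin 5, i.castSucc ∉ T) →
      ∀ x y : (Fin 5 → ℚ) × ℚ,
        (∃ c : Fin 6 → ℚ, (∀ i, 0 ≤ c i) ∧ x = ∑ i ∈ S, c i • gens i) →
        (∃ c : Fin 6 → ℚ, (∀ i, 0 ≤ c i) ∧ y = ∑ i ∈ T, c i • gens i) →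
        0 ≤ pairGP (psiGP y) x := by
  rintro S T - - x y ⟨c, hc, rfl⟩ ⟨d, hd, rfl⟩
  have := key (∑ i ∈ S, c i • gens i).1 (∑ i ∈ T, d i • gens i).1
    (∑ i ∈ S, c i • gens i).2 (∑ i ∈ T, d i • gens i).2
    (combo_nonneg S c hc) (combo_nonneg T d hd) (combo_sum_le S c hc) (combo_sum_le T d hd)
  simpa using this
end
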